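/- arXiv:1511.01947 — 8 statements merged into one kernel-verified Lean document; each statement's English description precedes it below -/
import Mathlib

section
/- Let φ : F → G be a homomorphism from a group F onto a finite nilpotent group G, and let H₁, …, H_n be subgroups of F. Writing G = P₁ × ⋯ × P_m as the direct product of its Sylow subgroups, with projections π_j : G → P_j, an element g ∈ G lies in the product set φ(H₁)φ(H₂)⋯φ(H_n) if and only if for every j, π_j(g) ∈ π_j(φ(H₁))π_j(φ(H₂))⋯π_j(φ(H_n)). -/
open Pointwise

universe u

private lemma mulSingle_mem_of_mem {m : ℕ} (p : Fin m → ℕ) (hp : ∀ j, (p j).Prime)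
    (hinj : Function.Injective p)
    (P : Fin m → Type u) [∀ j, Group (P j)] [∀ j, Finite (P j)]
    (hPp : ∀ j, IsPGroup (p j) (P j))
    (K : Subgroup (∀ j, P j)) (j : Fin m) (k : ∀ j, P j) (hk : k ∈ K) :
    Pi.mulSingle j (k j) ∈ K := by
  have horder : ∀ l, ∃ e, orderOf (k l) = p l ^ e := fun l =>
    (@IsPGroup.iff_orderOf _ _ _ ⟨hp l⟩).mp (hPp l) (k l)
  set M : ℕ := ∏ l ∈ Finset.univ.erase j, orderOf (k l) with hM
  have hco : M.Coprime (orderOf (k j)) := by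
    apply Nat.Coprime.prod_left
    intro l hl
    obtain ⟨e, he⟩ := horder l
    obtain ⟨e', he'⟩ := horder j
    rw [he, he']
    apply Nat.Coprime.pow
    rw [Nat.coprime_primes (hp l) (hp j)]
    exact fun h => (Finset.mem_erase.mp hl).1 (hinj h)
  obtain ⟨N, hN0, hN1⟩ := Nat.chineseRemainder hco 0 1
  have hMN : M ∣ N := (Nat.modEq_zero_iff_dvd).mp hN0
  have hkey : k ^ N = Pi.mulSingle j (k j) := by
    funext l
    rw [Pi.pow_apply]
    by_cases hl : l = j
    · subst hl
      rw [Pi.mulSingle_eq_same]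
      calc (k l) ^ N = (k l) ^ 1 := (pow_eq_pow_iff_modEq).mpr hN1
        _ = k l := pow_one _
    · rw [Pi.mulSingle_eq_of_ne (i' := l) (i := j) hl]
      have : orderOf (k l) ∣ N :=
        dvd_trans (Finset.dvd_prod_of_mem (fun l => orderOf (k l))
          (Finset.mem_erase.mpr ⟨hl, Finset.mem_univ l⟩)) hMN
      exact orderOf_dvd_iff_pow_eq_one.mp this
  rw [← hkey]
  exact pow_mem hk N

private lemma mem_of_proj_mem {m : ℕ} (p : Fin m → ℕ) (hp : ∀ j, (p j).Prime)
    (hinj : Function.Injective p)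
    (P : Fin m → Type u) [∀ j, Group (P j)] [∀ j, Finite (P j)]
    (hPp : ∀ j, IsPGroup (p j) (P j))
    (K : Subgroup (∀ j, P j)) (x : ∀ j, P j)
    (hx : ∀ j, ∃ k ∈ K, k j = x j) : x ∈ K := by
  have main : ∀ s : Finset (Fin m), (fun l => if l ∈ s then x l else 1) ∈ K := by
    intro s
    induction s using Finset.induction with
    | empty =>
      have : (fun l : Fin m => if l ∈ (∅ : Finset (Fin m)) then x l else 1) = 1 := by
        funext l; simp
      rw [this]; exact one_mem K
    | @insert a s ha ih =>
      obtain ⟨k, hk, hkj⟩ := hx a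
      have hsingle : Pi.mulSingle a (x a) ∈ K := by
        rw [← hkj]
        exact mulSingle_mem_of_mem p hp hinj P hPp K a k hk
      have : (fun l => if l ∈ insert a s then x l else 1)
          = Pi.mulSingle a (x a) * (fun l => if l ∈ s then x l else 1) := by
        funext l
        by_cases hl : l = a
        · subst hl
          simp [ha]
        · simp [Pi.mulSingle_eq_of_ne hl, hl]
      rw [this]
      exact mul_mem hsingle ih
  have := main Finset.univ
  simpa using this

theorem statement4 {F : Type u} [Group F] {m n : ℕ}
    (p : Fin m → ℕ) (hp : ∀ j, (p j).Prime) (hinj : Function.Injective p)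
    (P : Fin m → Type u) [∀ j, Group (P j)] [∀ j, Finite (P j)]
    (hPp : ∀ j, IsPGroup (p j) (P j))
    (φ : F →* (∀ j, P j)) (hφ : Function.Surjective φ)
    (H : Fin n → Subgroup F) (g : ∀ j, P j) :
    g ∈ (List.ofFn fun i => φ '' (H i : Set F)).prod ↔
      ∀ j, g j ∈ (List.ofFn fun i =>
        (fun x : ∀ j, P j => x j) '' (φ '' (H i : Set F))).prod := by
  constructor
  · intro hg j
    rw [Set.mem_prod_list_ofFn] at hg ⊢
    obtain ⟨f, hf⟩ := hg
    refine ⟨fun i => ⟨(f i : ∀ j, P j) j, ⟨f i, (f i).2, rfl⟩⟩, ?_⟩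
    have := congrFun hf j
    rw [Pi.list_prod_apply] at this
    rw [← this, List.map_ofFn]
    rfl
  · intro hg
    rw [Set.mem_prod_list_ofFn]
    choose f hf using fun j => Set.mem_prod_list_ofFn.mp (hg j)
    set b : Fin n → ∀ j, P j := fun i => fun j => (f j i : P j) with hb
    have hbK : ∀ i, b i ∈ φ '' (H i : Set F) := by
      intro i
      have hmem : b i ∈ (H i).map φ := by
        apply mem_of_proj_mem p hp hinj P hPp
        intro j
        obtain ⟨x, hx, hxj⟩ := (f j i).2
        refine ⟨x, ?_, hxj⟩
        rw [Subgroup.mem_map]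
        obtain ⟨y, hy, rfl⟩ := hx
        exact ⟨y, hy, rfl⟩
      obtain ⟨y, hy, hyb⟩ := Subgroup.mem_map.mp hmem
      exact ⟨y, hy, hyb⟩
    refine ⟨fun i => ⟨b i, hbK i⟩, ?_⟩
    funext j
    rw [Pi.list_prod_apply, List.map_ofFn]
    have := hf j
    rw [← this]
    rfl
end

section
/- Let F be a group and H₁, …, H_n subgroups of F. An element x ∈ F lies in the nil-closure of the product set H₁H₂⋯H_n if and only if x lies in the p-closure of H₁H₂⋯H_n for every prime p. (Here the nil-closure is the closure in the pro-nilpotent topology and the p-closure is the closure in the pro-p topology.) -/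
open Pointwise

universe u

/-- The pro-`H` topology on a group `G`: generated by the cosets of normal subgroups `N`
with `G ⧸ N` in the class `H`. -/
def proTopology (G : Type u) [Group G]
    (H : ∀ (K : Type u) [Group K], Prop) : TopologicalSpace G :=
  TopologicalSpace.generateFrom
    {U | ∃ (g : G) (N : Subgroup G) (hN : N.Normal),
      (letI := hN; H (G ⧸ N)) ∧ U = g • (N : Set G)}

/-- A pseudovariety of groups: a class of finite groups closed under finite direct
products, subgroups and homomorphic images. -/
structure IsPseudovariety (H : ∀ (K : Type u) [Group K], Prop) : Prop where
  finite : ∀ (K : Type u) [Group K], H K → Finite K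
  prod : ∀ (K L : Type u) [Group K] [Group L], H K → H L → H (K × L)
  subgroup : ∀ (K : Type u) [Group K] (S : Subgroup K), H K → H S
  image : ∀ (K L : Type u) [Group K] [Group L] (φ : K →* L),
    Function.Surjective φ → H K → H L

/-- The class of finite nilpotent groups. -/
def nilpotentVariety : ∀ (K : Type u) [Group K], Prop :=
  fun K _ => Finite K ∧ Group.IsNilpotent K

/-- The class of finite `p`-groups. -/
def pVariety (p : ℕ) : ∀ (K : Type u) [Group K], Prop :=
  fun K _ => Finite K ∧ IsPGroup p K

section Aux

variable {F : Type u} [Group F]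

lemma mem_proClosure {H : ∀ (K : Type u) [Group K], Prop}
    (htop : letI : (⊤ : Subgroup F).Normal := inferInstance; H (F ⧸ (⊤ : Subgroup F)))
    (hinf : ∀ (N M : Subgroup F) (hN : N.Normal) (hM : M.Normal),
      (letI := hN; H (F ⧸ N)) → (letI := hM; H (F ⧸ M)) →
      (letI : (N ⊓ M).Normal := (letI := hN; letI := hM; Subgroup.normal_inf_normal N M);
        H (F ⧸ (N ⊓ M))))
    (X : Set F) (x : F) :
    x ∈ @closure F (proTopology F H) X ↔
      ∀ (N : Subgroup F) (hN : N.Normal), (letI := hN; H (F ⧸ N)) →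
        ∃ y ∈ X, x⁻¹ * y ∈ N := by
  letI := proTopology F H
  set S : Set (Set F) := {U | ∃ (g : F) (N : Subgroup F) (hN : N.Normal),
      (letI := hN; H (F ⧸ N)) ∧ U = g • (N : Set F)} with hS
  constructor
  · intro hx N hN hHN
    have hopen : IsOpen (x • (N : Set F)) :=
      TopologicalSpace.GenerateOpen.basic _ ⟨x, N, hN, hHN, rfl⟩
    obtain ⟨y, hy1, hy2⟩ := mem_closure_iff.mp hx _ hopen
      ⟨1, N.one_mem, by simp⟩
    exact ⟨y, hy2, by
      obtain ⟨m, hm, rfl⟩ := hy1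
      simpa [mul_assoc] using hm⟩
  · intro h
    rw [mem_closure_iff]
    intro U hU hxU
    have key : ∀ U, TopologicalSpace.GenerateOpen S U → ∀ z ∈ U,
        ∃ N : Subgroup F, ∃ hN : N.Normal, (letI := hN; H (F ⧸ N)) ∧ z • (N : Set F) ⊆ U := by
      intro U hU
      induction hU with
      | basic V hV =>
        rintro z hz
        obtain ⟨g, N, hN, hHN, rfl⟩ := hV
        refine ⟨N, hN, hHN, ?_⟩
        have hzg : z • (N : Set F) = g • (N : Set F) := by
          rw [leftCoset_eq_iff]
          obtain ⟨m, hm, rfl⟩ := hz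
          simp only [smul_eq_mul]
          simpa [mul_assoc] using N.inv_mem hm
        rw [hzg]
      | univ => exact fun z _ => ⟨⊤, inferInstance, htop, by simp⟩
      | inter V W _ _ ihV ihW =>
        rintro z ⟨hzV, hzW⟩
        obtain ⟨N, hN, hHN, hNV⟩ := ihV z hzV
        obtain ⟨M, hM, hHM, hMW⟩ := ihW z hzW
        refine ⟨N ⊓ M, (letI := hN; letI := hM; Subgroup.normal_inf_normal N M),
          hinf N M hN hM hHN hHM, ?_⟩
        intro w hw
        obtain ⟨m, hm, rfl⟩ := hw
        exact ⟨hNV ⟨m, hm.1, rfl⟩, hMW ⟨m, hm.2, rfl⟩⟩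
      | sUnion 𝒮 _ ih =>
        rintro z ⟨V, hV, hzV⟩
        obtain ⟨N, hN, hHN, hsub⟩ := ih V hV z hzV
        exact ⟨N, hN, hHN, hsub.trans (Set.subset_sUnion_of_mem hV)⟩
    obtain ⟨N, hN, hHN, hsub⟩ := key U hU x hxU
    obtain ⟨y, hyX, hy⟩ := h N hN hHN
    exact ⟨y, hsub ⟨x⁻¹ * y, hy, by simp⟩, hyX⟩

lemma quotient_inf_embeds (N M : Subgroup F) [hN : N.Normal] [hM : M.Normal] :
    letI : (N ⊓ M).Normal := Subgroup.normal_inf_normal N M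
    ∃ f : (F ⧸ (N ⊓ M)) →* (F ⧸ N) × (F ⧸ M), Function.Injective f := by
  letI : (N ⊓ M).Normal := Subgroup.normal_inf_normal N M
  let ψ : F →* (F ⧸ N) × (F ⧸ M) := (QuotientGroup.mk' N).prod (QuotientGroup.mk' M)
  have hker : N ⊓ M = ψ.ker := by
    rw [MonoidHom.ker_prod]
    simp [ψ, QuotientGroup.ker_mk']
  exact ⟨(QuotientGroup.kerLift ψ).comp
      (QuotientGroup.quotientMulEquivOfEq hker).toMonoidHom,
    (QuotientGroup.kerLift_injective ψ).comp (MulEquiv.injective _)⟩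

lemma nilpotentVariety_top :
    letI : (⊤ : Subgroup F).Normal := inferInstance
    nilpotentVariety (F ⧸ (⊤ : Subgroup F)) := by
  haveI := QuotientGroup.subsingleton_quotient_top (G := F)
  exact ⟨Finite.of_subsingleton, inferInstance⟩

lemma pVariety_top (p : ℕ) :
    letI : (⊤ : Subgroup F).Normal := inferInstance
    pVariety p (F ⧸ (⊤ : Subgroup F)) := by
  haveI := QuotientGroup.subsingleton_quotient_top (G := F)
  exact ⟨Finite.of_subsingleton, fun g => ⟨0, by simp [Subsingleton.elim g 1]⟩⟩

lemma isPGroup_prod {p : ℕ} {A B : Type*} [Group A] [Group B]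
    (hA : IsPGroup p A) (hB : IsPGroup p B) : IsPGroup p (A × B) := by
  intro g
  obtain ⟨k, hk⟩ := hA g.1
  obtain ⟨l, hl⟩ := hB g.2
  refine ⟨k + l, ?_⟩
  have h1 : g.1 ^ p ^ (k + l) = 1 := by
    rw [pow_add, pow_mul, hk, one_pow]
  have h2 : g.2 ^ p ^ (k + l) = 1 := by
    rw [pow_add, mul_comm (p ^ k), pow_mul, hl, one_pow]
  exact Prod.ext (by simpa using h1) (by simpa using h2)

lemma nilpotentVariety_inf (N M : Subgroup F) [hN : N.Normal] [hM : M.Normal]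
    (h1 : nilpotentVariety (F ⧸ N)) (h2 : nilpotentVariety (F ⧸ M)) :
    letI : (N ⊓ M).Normal := Subgroup.normal_inf_normal N M
    nilpotentVariety (F ⧸ (N ⊓ M)) := by
  letI : (N ⊓ M).Normal := Subgroup.normal_inf_normal N M
  obtain ⟨f, hf⟩ := quotient_inf_embeds N M
  haveI := h1.1; haveI := h2.1; haveI := h1.2; haveI := h2.2
  refine ⟨Finite.of_injective f hf, ?_⟩
  exact nilpotent_of_mulEquiv (MonoidHom.ofInjective hf).symm

lemma pVariety_inf (p : ℕ) (N M : Subgroup F) [hN : N.Normal] [hM : M.Normal]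
    (h1 : pVariety p (F ⧸ N)) (h2 : pVariety p (F ⧸ M)) :
    letI : (N ⊓ M).Normal := Subgroup.normal_inf_normal N M
    pVariety p (F ⧸ (N ⊓ M)) := by
  letI : (N ⊓ M).Normal := Subgroup.normal_inf_normal N M
  obtain ⟨f, hf⟩ := quotient_inf_embeds N M
  haveI := h1.1; haveI := h2.1
  exact ⟨Finite.of_injective f hf, (isPGroup_prod h1.2 h2.2).of_injective f hf⟩

lemma mem_ofFn_prod {n : ℕ} : ∀ (s : Fin n → Set F) (y : F),
    (y ∈ (List.ofFn s).prod ↔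
      ∃ g : Fin n → F, (∀ i, g i ∈ s i) ∧ (List.ofFn g).prod = y) := by
  induction n with
  | zero =>
    intro s y
    simp only [List.ofFn_zero, List.prod_nil, Set.mem_one]
    constructor
    · rintro rfl; exact ⟨fun i => i.elim0, fun i => i.elim0, by simp⟩
    · rintro ⟨g, _, rfl⟩; simp
  | succ m ih =>
    intro s y
    rw [List.ofFn_succ, List.prod_cons, Set.mem_mul]
    constructor
    · rintro ⟨a, ha, b, hb, rfl⟩
      obtain ⟨g, hg, rfl⟩ := (ih _ b).mp hb
      refine ⟨Fin.cons a g, ?_, ?_⟩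
      · intro i
        refine Fin.cases ?_ ?_ i
        · simpa using ha
        · intro j; simpa using hg j
      · rw [List.ofFn_succ]
        simp
    · rintro ⟨g, hg, rfl⟩
      refine ⟨g 0, hg 0, (List.ofFn fun i => g i.succ).prod, ?_, ?_⟩
      · exact (ih _ _).mpr ⟨fun i => g i.succ, fun i => hg i.succ, rfl⟩
      · rw [List.ofFn_succ, List.prod_cons]

lemma isPGroup_pi {p : ℕ} {ι : Type*} [Fintype ι] {G : ι → Type*} [∀ i, Group (G i)]
    (h : ∀ i, IsPGroup p (G i)) : IsPGroup p (∀ i, G i) := by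
  intro g
  choose k hk using fun i => h i (g i)
  refine ⟨Finset.univ.sup k, funext fun i => ?_⟩
  have hle : k i ≤ Finset.univ.sup k := Finset.le_sup (Finset.mem_univ i)
  have : p ^ Finset.univ.sup k = p ^ k i * p ^ (Finset.univ.sup k - k i) := by
    rw [← pow_add, Nat.add_sub_cancel' hle]
  simp only [Pi.pow_apply, Pi.one_apply, this, pow_mul, hk i, one_pow]

lemma mem_of_proj {π : Finset ℕ} (hπ : ∀ q ∈ π, q.Prime)
    {G : {q // q ∈ π} → Type u} [∀ q, Group (G q)]
    (hG : ∀ q, IsPGroup q.1 (G q))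
    (K : Subgroup (∀ q, G q)) (c : ∀ q, G q)
    (hc : ∀ q, ∃ k ∈ K, k q = c q) : c ∈ K := by
  classical
  have hsingle : ∀ q, Pi.mulSingle q (c q) ∈ K := by
    intro p
    haveI hpp : Fact p.1.Prime := ⟨hπ p.1 p.2⟩
    obtain ⟨k, hkK, hkp⟩ := hc p
    have horder : ∀ q : {q // q ∈ π}, ∃ a : ℕ, orderOf (k q) = q.1 ^ a := by
      intro q
      haveI : Fact q.1.Prime := ⟨hπ q.1 q.2⟩
      exact (IsPGroup.iff_orderOf.mp (hG q)) (k q)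
    let o := orderOf (k p)
    let m := ∏ q ∈ Finset.univ.erase p, orderOf (k q)
    have hdvd : ∀ q, q ≠ p → orderOf (k q) ∣ m := fun q hq =>
      Finset.dvd_prod_of_mem _ (by simp [hq])
    have hcop : Nat.Coprime m o := by
      apply Nat.Coprime.prod_left
      intro q hq
      have hqp : q ≠ p := (Finset.mem_erase.mp hq).1
      obtain ⟨a, ha⟩ := horder q
      obtain ⟨b, hb⟩ := horder p
      show Nat.Coprime (orderOf (k q)) (orderOf (k p))
      rw [ha, hb]
      exact Nat.Coprime.pow a b
        ((Nat.coprime_primes (hπ q.1 q.2) (hπ p.1 p.2)).mpr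
          (fun h => hqp (Subtype.ext h)))
    obtain ⟨b, hb⟩ := horder p
    have hone : 1 ≤ o := Nat.one_le_iff_ne_zero.mpr
      (by show orderOf (k p) ≠ 0; rw [hb]; exact pow_ne_zero b (hπ p.1 p.2).pos.ne')
    rcases Nat.lt_or_ge 1 o with h1 | h1
    case inr =>
      -- o = 1 : k p = 1
      have ho1 : orderOf (k p) = 1 := le_antisymm h1 hone
      have : k p = 1 := orderOf_eq_one_iff.mp ho1
      rw [← hkp, this]
      simpa using K.one_mem
    · -- 1 < o
      obtain ⟨t, -, ht⟩ := Nat.exists_mul_mod_eq_one_of_coprime hcop h1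
      have hkey : k ^ (m * t) = Pi.mulSingle p (c p) := by
        funext q
        rcases eq_or_ne q p with rfl | hq
        · rw [Pi.mulSingle_eq_same, ← hkp]
          have : (k ^ (m * t)) q = (k q) ^ (m * t) := by simp
          rw [this, ← pow_mod_orderOf, ht, pow_one]
        · have : (k ^ (m * t)) q = (k q) ^ (m * t) := by simp
          rw [this, Pi.mulSingle_eq_of_ne hq]
          exact orderOf_dvd_iff_pow_eq_one.mp ((hdvd q hq).trans (Dvd.intro t rfl))
      rw [← hkey]
      exact K.pow_mem hkK _
  rw [← Finset.noncommProd_mulSingle c]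
  exact K.noncommProd_mem _ (fun i _ => hsingle i)

lemma backward_step {n : ℕ} (H : Fin n → Subgroup F) (x : F)
    (hp : ∀ p : ℕ, p.Prime → ∀ (M : Subgroup F) (hM : M.Normal),
      (letI := hM; pVariety p (F ⧸ M)) →
      ∃ y ∈ (List.ofFn fun i => ((H i : Subgroup F) : Set F)).prod, x⁻¹ * y ∈ M)
    (N : Subgroup F) (hN : N.Normal) (h : letI := hN; nilpotentVariety (F ⧸ N)) :
    ∃ y ∈ (List.ofFn fun i => ((H i : Subgroup F) : Set F)).prod, x⁻¹ * y ∈ N := by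
  classical
  letI := hN
  obtain ⟨hfin, hnil⟩ := h
  haveI := hfin
  haveI : ∀ p : ℕ, Finite (Sylow p (F ⧸ N)) := fun p =>
    Finite.of_injective (fun P => ((P : Subgroup (F ⧸ N)) : Set (F ⧸ N)))
      (fun a b hab => by
        cases a; cases b
        simp only at hab
        congr 1
        exact SetLike.coe_injective hab)
  have hsyl : ∀ (p : ℕ) (_ : Fact p.Prime) (P : Sylow p (F ⧸ N)),
      (P : Subgroup (F ⧸ N)).Normal :=
    ((isNilpotent_of_finite_tfae (G := F ⧸ N)).out 0 3).mp hnil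
  let e := Sylow.directProductOfNormal (G := F ⧸ N)
    (fun {p} _ P => hsyl p ‹_› P)
  set π := (Nat.card (F ⧸ N)).primeFactors with hπdef
  have hπ : ∀ q ∈ π, q.Prime := fun q hq => Nat.prime_of_mem_primeFactors hq
  let G : {q // q ∈ π} → Type u := fun q => ∀ P : Sylow q.1 (F ⧸ N), P
  let μ : F →* (∀ q, G q) := e.symm.toMonoidHom.comp (QuotientGroup.mk' N)
  have hG : ∀ q, IsPGroup q.1 (G q) := by
    intro q
    haveI : Fact q.1.Prime := ⟨hπ q.1 q.2⟩
    haveI := Fintype.ofFinite (Sylow q.1 (F ⧸ N))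
    exact isPGroup_pi fun P => P.2
  -- For each prime q in π, get a witness from the pro-q hypothesis
  have hv : ∀ q : {q // q ∈ π}, ∃ g : Fin n → F,
      (∀ i, g i ∈ H i) ∧ μ ((List.ofFn g).prod) q = μ x q := by
    intro q
    haveI : Fact q.1.Prime := ⟨hπ q.1 q.2⟩
    let ψ : F →* G q := (Pi.evalMonoidHom G q).comp μ
    have hfinGq : Finite (G q) := by
      haveI : ∀ P : Sylow q.1 (F ⧸ N), Finite (P : Subgroup (F ⧸ N)) := fun P =>
        Subtype.finite
      exact Pi.finite
    haveI := hfinGq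
    have hMvar : letI := MonoidHom.normal_ker ψ; pVariety q.1 (F ⧸ ψ.ker) := by
      letI e2 := QuotientGroup.quotientKerEquivRange ψ
      refine ⟨Finite.of_injective e2 e2.injective, ?_⟩
      exact ((hG q).to_subgroup ψ.range).of_injective e2.toMonoidHom e2.injective
    obtain ⟨y, hyX, hyker⟩ := hp q.1 (hπ q.1 q.2) ψ.ker (MonoidHom.normal_ker ψ) hMvar
    obtain ⟨g, hg, rfl⟩ := (mem_ofFn_prod _ y).mp hyX
    refine ⟨g, hg, ?_⟩
    have h1 : ψ (x⁻¹ * (List.ofFn g).prod) = 1 := hyker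
    rw [map_mul, map_inv] at h1
    exact (inv_mul_eq_one.mp h1).symm
  choose g hg hgx using hv
  -- assemble, for each i, the element c i of the product group
  set c : Fin n → (∀ q, G q) := fun i q => μ (g q i) q with hc
  have hcmem : ∀ i, c i ∈ (H i).map μ := by
    intro i
    apply mem_of_proj hπ hG
    intro q
    exact ⟨μ (g q i), Subgroup.mem_map.mpr ⟨g q i, hg q i, rfl⟩, rfl⟩
  have : ∀ i, ∃ h ∈ H i, μ h = c i := by
    intro i
    obtain ⟨h, hh, hh2⟩ := Subgroup.mem_map.mp (hcmem i)
    exact ⟨h, hh, hh2⟩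
  choose w hw hwc using this
  refine ⟨(List.ofFn w).prod, (mem_ofFn_prod _ _).mpr ⟨w, hw, rfl⟩, ?_⟩
  -- show x⁻¹ * prod ∈ N
  have hμ : μ ((List.ofFn w).prod) = μ x := by
    funext q
    have e1 : ∀ (v : Fin n → F),
        μ ((List.ofFn v).prod) q = (List.ofFn fun i => μ (v i) q).prod := by
      intro v
      have : μ ((List.ofFn v).prod) = (List.ofFn fun i => μ (v i)).prod := by
        rw [map_list_prod, List.map_ofFn]; rfl
      rw [this]
      have := map_list_prod (Pi.evalMonoidHom G q) (List.ofFn fun i => μ (v i))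
      simpa [List.map_ofFn, Function.comp_def] using this
    rw [e1 w]
    have : (List.ofFn fun i => μ (w i) q) = (List.ofFn fun i => μ (g q i) q) := by
      congr 1
      funext i
      rw [hwc i]
    rw [this, ← e1 (g q)]
    exact hgx q
  have heq : (QuotientGroup.mk' N) ((List.ofFn w).prod) = (QuotientGroup.mk' N) x :=
    e.symm.injective hμ
  rw [← QuotientGroup.eq]
  simpa [QuotientGroup.mk'_apply] using heq.symm

end Aux

theorem statement5 {F : Type u} [Group F] {n : ℕ} (H : Fin n → Subgroup F) (x : F) :
    x ∈ @closure F (proTopology F nilpotentVariety)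
        ((List.ofFn fun i => (H i : Set F)).prod) ↔
      ∀ p : ℕ, p.Prime →
        x ∈ @closure F (proTopology F (pVariety p))
          ((List.ofFn fun i => (H i : Set F)).prod) := by
  rw [mem_proClosure nilpotentVariety_top
    (fun N M hN hM h1 h2 => letI := hN; letI := hM; nilpotentVariety_inf N M h1 h2)]
  constructor
  · intro h p hp
    rw [mem_proClosure (pVariety_top p)
      (fun N M hN hM h1 h2 => letI := hN; letI := hM; pVariety_inf p N M h1 h2)]
    intro N hN hHN
    refine h N hN ?_
    letI := hN
    haveI := hHN.1
    haveI := Fact.mk hp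
    exact ⟨hHN.1, hHN.2.isNilpotent⟩
  · intro h N hN hHN
    refine backward_step H x ?_ N hN hHN
    intro p hp M hM hpM
    exact (mem_proClosure (pVariety_top p)
      (fun N M hN hM h1 h2 => letI := hN; letI := hM; pVariety_inf p N M h1 h2) _ x).mp
      (h p hp) M hM hpM
end

section
/- Let F be a group and H₁, …, H_n subgroups of F. If the product set H₁H₂⋯H_n is p-dense in F for every prime p (i.e., for every homomorphism φ from F onto a finite p-group, φ(H₁⋯H_n) is all of the p-group), then H₁H₂⋯H_n is nil-dense in F (i.e., for every homomorphism φ from F onto a finite nilpotent group G, φ(H₁⋯H_n) = G). -/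
open Pointwise

universe u

lemma mem_prod_ofFn {M : Type*} [Monoid M] {n : ℕ} (s : Fin n → Set M) (x : M) :
    x ∈ (List.ofFn fun i => s i).prod ↔
      ∃ y : Fin n → M, (∀ i, y i ∈ s i) ∧ (List.ofFn y).prod = x := by
  induction n generalizing x with
  | zero =>
    simp [Set.mem_one, eq_comm]
  | succ m ih =>
    rw [List.ofFn_succ, List.prod_cons]
    constructor
    · rintro hx
      rw [Set.mem_mul] at hx
      obtain ⟨a, ha, b, hb, rfl⟩ := hx
      obtain ⟨y, hy, hyb⟩ := (ih (fun i => s i.succ) b).mp hb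
      refine ⟨Fin.cons a y, ?_, ?_⟩
      · intro i
        refine Fin.cases ?_ ?_ i
        · simpa using ha
        · intro j; simpa using hy j
      · rw [List.ofFn_succ, List.prod_cons]
        simp only [Fin.cons_zero, Fin.cons_succ]
        rw [hyb]
    · rintro ⟨y, hy, rfl⟩
      rw [List.ofFn_succ, List.prod_cons]
      exact Set.mul_mem_mul (hy 0)
        ((ih (fun i => s i.succ) _).mpr ⟨fun i => y i.succ, fun i => hy i.succ, rfl⟩)

lemma image_prod_ofFn {M N : Type*} [Monoid M] [Monoid N] (φ : M →* N) {n : ℕ}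
    (s : Fin n → Set M) :
    φ '' (List.ofFn fun i => s i).prod = (List.ofFn fun i => φ '' s i).prod := by
  induction n with
  | zero => simp [Set.image_one, ← Set.singleton_one]
  | succ m ih =>
    rw [List.ofFn_succ, List.ofFn_succ, List.prod_cons, List.prod_cons, Set.image_mul,
      ih (fun i => s i.succ)]

lemma mulSingle_mem_of_coprime {ι : Type*} [Fintype ι] [DecidableEq ι] {Γ : ι → Type u}
    [∀ i, Group (Γ i)] [∀ i, Finite (Γ i)]
    (hcop : Pairwise fun i j => Nat.Coprime (Nat.card (Γ i)) (Nat.card (Γ j)))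
    (K : Subgroup (∀ i, Γ i)) (i : ι) (y : Γ i)
    (hy : y ∈ K.map (Pi.evalMonoidHom Γ i)) : Pi.mulSingle i y ∈ K := by
  set L := K.map (Pi.evalMonoidHom Γ i) with hL
  set m : ℕ := ∏ j ∈ Finset.univ.erase i, Nat.card (Γ j) with hm
  have hcop' : (Nat.card (Γ i)).Coprime m := by
    apply Nat.Coprime.prod_right
    intro j hj
    exact hcop (Finset.ne_of_mem_erase hj).symm
  have hcopL : (Nat.card L).Coprime m :=
    Nat.Coprime.coprime_dvd_left (Subgroup.card_subgroup_dvd_card L) hcop'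
  obtain ⟨z, hz⟩ := (powCoprime hcopL).surjective ⟨y, hy⟩
  obtain ⟨k, hk, hki⟩ := z.2
  have hki' : k i = (z : Γ i) := hki
  have hkm : k ^ m ∈ K := pow_mem hk m
  have : k ^ m = Pi.mulSingle i y := by
    funext j
    rw [Pi.pow_apply]
    by_cases hji : j = i
    · subst hji
      have hzy : (z : Γ j) ^ m = y := congrArg Subtype.val hz
      rw [hki', hzy, Pi.mulSingle_eq_same]
    · rw [Pi.mulSingle_eq_of_ne hji]
      have hdvd : orderOf (k j) ∣ m := by
        refine dvd_trans (orderOf_dvd_natCard _) ?_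
        exact Finset.dvd_prod_of_mem _ (Finset.mem_erase.mpr ⟨hji, Finset.mem_univ j⟩)
      exact orderOf_dvd_iff_pow_eq_one.mp hdvd
  rwa [this] at hkm

lemma pi_prod_of_proj {ι : Type*} [Fintype ι] [DecidableEq ι] {Γ : ι → Type u}
    [∀ i, Group (Γ i)] [∀ i, Finite (Γ i)]
    (hcop : Pairwise fun i j => Nat.Coprime (Nat.card (Γ i)) (Nat.card (Γ j)))
    {n : ℕ} (K : Fin n → Subgroup (∀ i, Γ i))
    (h : ∀ i, (Pi.evalMonoidHom Γ i) '' (List.ofFn fun j => (K j : Set (∀ i, Γ i))).prod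
      = Set.univ) :
    (List.ofFn fun j => (K j : Set (∀ i, Γ i))).prod = Set.univ := by
  ext x
  simp only [Set.mem_univ, iff_true]
  have key : ∀ i : ι, ∃ y : Fin n → Γ i,
      (∀ j, y j ∈ (K j).map (Pi.evalMonoidHom Γ i)) ∧ (List.ofFn y).prod = x i := by
    intro i
    have hx : x i ∈ (List.ofFn fun j => Pi.evalMonoidHom Γ i '' (K j : Set (∀ i, Γ i))).prod := by
      rw [← image_prod_ofFn, h i]; trivial
    obtain ⟨y, hy, hyx⟩ := (mem_prod_ofFn _ _).mp hx
    exact ⟨y, fun j => by simpa [Subgroup.mem_map] using hy j, hyx⟩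
  choose Y hY hYx using key
  rw [mem_prod_ofFn]
  refine ⟨fun j i => Y i j, fun j => ?_, ?_⟩
  · show (fun i => Y i j) ∈ (K j : Set (∀ i, Γ i))
    have : (fun i => Y i j) =
        (Finset.univ.noncommProd (fun i => Pi.mulSingle i (Y i j)) fun i _ j' _ _ =>
          Pi.mulSingle_apply_commute (fun i => Y i j) i j') :=
      (Finset.noncommProd_mulSingle _).symm
    rw [this]
    exact Subgroup.noncommProd_mem _ _ fun i _ =>
      mulSingle_mem_of_coprime hcop (K j) i (Y i j) (hY i j)
  · funext i
    have := map_list_prod (Pi.evalMonoidHom Γ i) (List.ofFn fun j i => Y i j)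
    simp only [List.map_ofFn] at this
    have h2 : (List.ofFn (fun j i => Y i j)).prod i = (List.ofFn fun j => Y i j).prod := by
      simpa [Function.comp_def, Function.eval, Pi.evalMonoidHom_apply] using this
    rw [h2, hYx i]

theorem statement6 {F : Type u} [Group F] {n : ℕ} (H : Fin n → Subgroup F)
    (hdense : ∀ (p : ℕ), p.Prime → ∀ (P : Type u) [Group P], Finite P → IsPGroup p P →
      ∀ φ : F →* P, Function.Surjective φ →
        φ '' (List.ofFn fun i => (H i : Set F)).prod = Set.univ) :
    ∀ (G : Type u) [Group G], Finite G → Group.IsNilpotent G →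
      ∀ φ : F →* G, Function.Surjective φ →
        φ '' (List.ofFn fun i => (H i : Set F)).prod = Set.univ := by
  intro G _ hfin hnilp φ hφ
  classical
  haveI : Finite G := hfin
  haveI : Group.IsNilpotent G := hnilp
  obtain ⟨e⟩ : Nonempty
      ((∀ p : (Nat.card G).primeFactors, ∀ P : Sylow p G, (↑P : Subgroup G)) ≃* G) :=
    ((isNilpotent_of_finite_tfae (G := G)).out 0 4).mp hnilp
  set ι := ((Nat.card G).primeFactors : Finset ℕ)
  set Γ : ι → Type u := fun p => ∀ P : Sylow (p : ℕ) G, (↑P : Subgroup G) with hΓ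
  haveI : ∀ p : ι, Finite (Γ p) := fun p => by
    haveI : Fact (Nat.Prime (p : ℕ)) := ⟨Nat.prime_of_mem_primeFactors p.2⟩
    infer_instance
  have hpg : ∀ p : ι, IsPGroup (p : ℕ) (Γ p) := by
    intro p
    haveI : Fact (Nat.Prime (p : ℕ)) := ⟨Nat.prime_of_mem_primeFactors p.2⟩
    intro g
    have hP : ∀ P : Sylow (p : ℕ) G, ∃ k : ℕ, (g P) ^ ((p : ℕ)) ^ k = 1 := fun P =>
      P.isPGroup' (g P)
    choose k hk using hP
    haveI : Fintype (Sylow (p : ℕ) G) := Fintype.ofFinite _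
    refine ⟨∑ P : Sylow (p : ℕ) G, k P, ?_⟩
    funext P
    rw [Pi.pow_apply, Pi.one_apply]
    have hle : k P ≤ ∑ Q : Sylow (p : ℕ) G, k Q := Finset.single_le_sum
      (fun _ _ => Nat.zero_le _) (Finset.mem_univ P)
    obtain ⟨d, hd⟩ := Nat.exists_eq_add_of_le hle
    rw [hd, pow_add, pow_mul, hk P, one_pow]
  have hcop : Pairwise fun p q : ι => Nat.Coprime (Nat.card (Γ p)) (Nat.card (Γ q)) := by
    intro p q hpq
    haveI hp : Fact (Nat.Prime (p : ℕ)) := ⟨Nat.prime_of_mem_primeFactors p.2⟩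
    haveI hq : Fact (Nat.Prime (q : ℕ)) := ⟨Nat.prime_of_mem_primeFactors q.2⟩
    obtain ⟨a, ha⟩ := IsPGroup.iff_card.mp (hpg p)
    obtain ⟨b, hb⟩ := IsPGroup.iff_card.mp (hpg q)
    rw [ha, hb]
    exact Nat.coprime_pow_primes _ _ hp.out hq.out (fun h => hpq (Subtype.ext h))
  set ρ : F →* (∀ p : ι, Γ p) := (e.symm : G →* _).comp φ with hρ
  have hρsurj : Function.Surjective ρ := (e.symm.surjective).comp hφ
  set K : Fin n → Subgroup (∀ p : ι, Γ p) := fun j => (H j).map ρ with hK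
  have himg : ρ '' (List.ofFn fun i => (H i : Set F)).prod
      = (List.ofFn fun j => (K j : Set (∀ p : ι, Γ p))).prod := by
    rw [image_prod_ofFn]
    rfl
  have hproj : ∀ p : ι, (Pi.evalMonoidHom Γ p) ''
      (List.ofFn fun j => (K j : Set (∀ p : ι, Γ p))).prod = Set.univ := by
    intro p
    rw [← himg, ← Set.image_comp]
    have := hdense (p : ℕ) (Nat.prime_of_mem_primeFactors p.2) (Γ p) inferInstance (hpg p)
      ((Pi.evalMonoidHom Γ p).comp ρ)
      ((Function.surjective_eval p).comp hρsurj)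
    simpa [Function.comp] using this
  have hall := pi_prod_of_proj hcop K hproj
  rw [← himg] at hall
  have hfinal : (e : (∀ p : ι, Γ p) →* G) '' (ρ '' (List.ofFn fun i => (H i : Set F)).prod)
      = Set.univ := by
    rw [hall, Set.image_univ]
    exact e.surjective.range_eq
  rw [← Set.image_comp] at hfinal
  have hcomp : ((e : (∀ p : ι, Γ p) →* G)) ∘ ρ = φ := by
    funext x
    simp [hρ]
  rwa [hcomp] at hfinal
end

section
/- Let F be a group and H₁, …, H_n subgroups of F. If for every prime p there exists an index i (depending on p) such that Hᵢ is p-dense in F, then the product set H₁H₂⋯H_n is nil-dense in F. -/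
open Pointwise

universe u

private lemma aux_image_prod {F G : Type*} [Group F] [Group G] (φ : F →* G) :
    ∀ l : List (Set F), φ '' l.prod = (l.map (fun s => φ '' s)).prod := by
  intro l
  induction l with
  | nil => simp [Set.singleton_one]
  | cons s l ih =>
    rw [List.prod_cons, List.map_cons, List.prod_cons, Set.image_mul, ih]

private lemma aux_listprod_coe {G : Type*} [Group G] :
    ∀ l : List (Subgroup G), (∀ N ∈ l, N.Normal) →
      (l.map (fun N : Subgroup G => (N : Set G))).prod
        = ((l.foldr (· ⊔ ·) ⊥ : Subgroup G) : Set G) := by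
  intro l
  induction l with
  | nil => intro _; simp [Set.singleton_one]
  | cons N l ih =>
    intro h
    haveI : N.Normal := h N (List.mem_cons_self)
    rw [List.map_cons, List.prod_cons, ih (fun M hM => h M (List.mem_cons_of_mem _ hM)),
      List.foldr_cons, ← Subgroup.normal_mul]

private lemma aux_le_foldr {G : Type*} [Group G] :
    ∀ (l : List (Subgroup G)) (N : Subgroup G), N ∈ l → N ≤ l.foldr (· ⊔ ·) ⊥ := by
  intro l
  induction l with
  | nil => simp
  | cons M l ih =>
    intro N hN
    rcases List.mem_cons.mp hN with h | h
    · subst h; exact le_sup_left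
    · exact le_trans (ih N h) le_sup_right

private lemma aux_prod_mono {G : Type*} [Group G] :
    ∀ {m : ℕ} (f g : Fin m → Set G), (∀ i, f i ⊆ g i) →
      (List.ofFn f).prod ⊆ (List.ofFn g).prod := by
  intro m
  induction m with
  | zero => intro f g _; simp
  | succ m ih =>
    intro f g h
    rw [List.ofFn_succ, List.prod_cons, List.ofFn_succ, List.prod_cons]
    exact Set.mul_subset_mul (h 0) (ih _ _ fun i => h i.succ)

private lemma aux_conj_map {G : Type*} [Group G] (N : Subgroup G) (hN : N.Normal) (g : G) :
    N.map (MulAut.conj g).toMonoidHom = N := by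
  ext x
  simp only [Subgroup.mem_map, MulEquiv.coe_toMonoidHom, MulAut.conj_apply]
  constructor
  · rintro ⟨y, hy, rfl⟩
    exact hN.conj_mem y hy g
  · intro hx
    exact ⟨g⁻¹ * x * g, by simpa [mul_assoc] using hN.conj_mem x hx g⁻¹, by group⟩

private lemma aux_normal_iSup {G : Type*} [Group G] {ι : Sort*} (N : ι → Subgroup G)
    (hN : ∀ j, (N j).Normal) : (⨆ j, N j).Normal := by
  constructor
  intro x hx g
  have h : (⨆ j, N j).map (MulAut.conj g).toMonoidHom = ⨆ j, N j := by
    rw [Subgroup.map_iSup]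
    exact iSup_congr fun j => aux_conj_map (N j) (hN j) g
  rw [← h]
  exact Subgroup.mem_map.mpr ⟨x, hx, by simp⟩

theorem statement7 {F : Type u} [Group F] {n : ℕ} (H : Fin n → Subgroup F)
    (hdense : ∀ (p : ℕ), p.Prime → ∃ i, ∀ (P : Type u) [Group P], Finite P →
      IsPGroup p P → ∀ φ : F →* P, Function.Surjective φ →
        φ '' (H i : Set F) = Set.univ) :
    ∀ (G : Type u) [Group G], Finite G → Group.IsNilpotent G →
      ∀ φ : F →* G, Function.Surjective φ →
        φ '' (List.ofFn fun i => (H i : Set F)).prod = Set.univ := by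
  intro G _ hfin hnil φ hφ
  classical
  haveI := hfin
  haveI := hnil
  have hnorm : ∀ (p : ℕ) (hp : Fact p.Prime) (P : Sylow p G), (↑P : Subgroup G).Normal :=
    ((isNilpotent_of_finite_tfae (G := G)).out 0 3).mp hnil
  set K : Fin n → Subgroup G := fun i => (H i).map φ with hK
  have claim : ∀ (p : ℕ) (hp : p.Prime) (P : Sylow p G), ∃ i, (P : Subgroup G) ≤ K i := by
    intro p hp P
    haveI : Fact p.Prime := ⟨hp⟩
    obtain ⟨i, hi⟩ := hdense p hp
    refine ⟨i, ?_⟩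
    by_cases hmem : p ∈ (Nat.card G).primeFactors
    · let e := Sylow.directProductOfNormal (G := G) (fun {p} _ P => hnorm p ‹_› P)
      let π₁ : G →* ((Q : Sylow p G) → ↥Q) :=
        (Pi.evalMonoidHom (fun q : (Nat.card G).primeFactors => (Q : Sylow q.1 G) → ↥Q)
          (⟨p, hmem⟩ : (Nat.card G).primeFactors)).comp e.symm.toMonoidHom
      let π : G →* ↥(P : Subgroup G) :=
        (Pi.evalMonoidHom (fun Q : Sylow p G => ↥Q) P).comp π₁
      have hπ : Function.Surjective π := by
        have h1 : Function.Surjective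
            (⇑(Pi.evalMonoidHom (fun Q : Sylow p G => ↥Q) P)) :=
          Function.surjective_eval (β := fun Q : Sylow p G => ↥Q) P
        have h2 : Function.Surjective π₁ :=
          (Function.surjective_eval
            (β := fun q : (Nat.card G).primeFactors => (Q : Sylow q.1 G) → ↥Q)
            ⟨p, hmem⟩).comp e.symm.surjective
        exact h1.comp h2
      have himg := hi ↥(P : Subgroup G) inferInstance P.isPGroup' (π.comp φ) (hπ.comp hφ)
      have hKi : Function.Surjective (π.comp (K i).subtype) := by
        intro y
        have hy : y ∈ (π.comp φ) '' ((H i : Set F)) := by rw [himg]; exact Set.mem_univ y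
        obtain ⟨x, hx, hxy⟩ := hy
        exact ⟨⟨φ x, Subgroup.mem_map_of_mem φ hx⟩, hxy⟩
      have hdvd : Nat.card ↥(P : Subgroup G) ∣ Nat.card ↥(K i) :=
        Subgroup.card_dvd_of_surjective _ hKi
      obtain ⟨Q⟩ : Nonempty (Sylow p ↥(K i)) := inferInstance
      set QG : Subgroup G := (Q : Subgroup ↥(K i)).map (K i).subtype with hQG
      have hQG_le : QG ≤ K i := Subgroup.map_subtype_le _
      have hQGp : IsPGroup p ↥QG := Q.isPGroup'.map _
      obtain ⟨R, hQR⟩ := hQGp.exists_le_sylow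
      haveI := Sylow.unique_of_normal P (hnorm p ‹_› P)
      have hRP : R = P := Subsingleton.elim R P
      have hcardQ : Nat.card ↥QG = p ^ (Nat.card ↥(K i)).factorization p := by
        rw [← Sylow.card_eq_multiplicity Q]
        exact (Nat.card_congr
          (Subgroup.equivMapOfInjective _ _ (Subgroup.subtype_injective _)).toEquiv).symm
      have hcardP : Nat.card ↥(P : Subgroup G) = p ^ (Nat.card G).factorization p :=
        Sylow.card_eq_multiplicity P
      have hle : Nat.card ↥(P : Subgroup G) ≤ Nat.card ↥QG := by
        rw [hcardQ, hcardP]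
        refine Nat.pow_le_pow_right hp.pos ?_
        have h1 : (p : ℕ) ^ (Nat.card G).factorization p ∣ Nat.card ↥(K i) := hcardP ▸ hdvd
        exact (Nat.Prime.pow_dvd_iff_le_factorization hp (Nat.card_pos).ne').mp h1
      have hQP : QG = (P : Subgroup G) :=
        Subgroup.eq_of_le_of_card_ge (hRP ▸ hQR) hle
      exact hQP ▸ hQG_le
    · have h1 : Nat.card ↥(P : Subgroup G) = 1 := by
        rw [Sylow.card_eq_multiplicity P,
          Nat.factorization_eq_zero_of_not_dvd (fun hd => hmem
            (Nat.mem_primeFactors.mpr ⟨hp, hd, Nat.card_pos.ne'⟩)), pow_zero]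
      have h2 : (P : Subgroup G) = ⊥ := Subgroup.card_eq_one.mp h1
      rw [h2]; exact bot_le
  choose c hc using claim
  set ps := (Nat.card G).primeFactors with hps
  have hfact : ∀ p : ps, Fact (Nat.Prime p.1) := fun p => ⟨Nat.prime_of_mem_primeFactors p.2⟩
  let S : ∀ p : ps, Sylow p.1 G := fun p => haveI := hfact p; Classical.arbitrary _
  let L : Fin n → Subgroup G := fun i =>
    ⨆ p : ps, ⨆ (_ : c p.1 (hfact p).out (S p) = i), ((S p : Subgroup G))
  have hLnorm : ∀ i, (L i).Normal := by
    intro i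
    refine aux_normal_iSup _ fun p => aux_normal_iSup _ fun hpi => ?_
    exact hnorm p.1 (hfact p) (S p)
  have hLK : ∀ i, L i ≤ K i := by
    intro i
    refine iSup_le fun p => iSup_le fun hpi => ?_
    rw [← hpi]
    exact hc p.1 (hfact p).out (S p)
  set fold := (List.ofFn L).foldr (· ⊔ ·) ⊥ with hfold
  have hSyl_le : ∀ p : ps, (S p : Subgroup G) ≤ fold := by
    intro p
    have h1 : (S p : Subgroup G) ≤ L (c p.1 (hfact p).out (S p)) :=
      le_iSup_of_le p (le_iSup_of_le rfl le_rfl)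
    exact h1.trans (aux_le_foldr _ _ (List.mem_ofFn.mpr ⟨_, rfl⟩))
  have hfold_top : fold = ⊤ := by
    have hcardG : Nat.card G ≠ 0 := Nat.card_pos.ne'
    apply Subgroup.eq_top_of_le_card
    have hdvd : Nat.card G ∣ Nat.card ↥fold := by
      rw [← Nat.factorization_le_iff_dvd hcardG (Nat.card_pos (α := ↥fold)).ne']
      refine (Finsupp.le_iff _ _).mpr fun p hp => ?_
      rw [Nat.support_factorization] at hp
      haveI : Fact p.Prime := ⟨Nat.prime_of_mem_primeFactors hp⟩
      have h1 : p ^ (Nat.card G).factorization p ∣ Nat.card ↥fold := by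
        rw [← Sylow.card_eq_multiplicity (S ⟨p, hp⟩)]
        exact Subgroup.card_dvd_of_le (hSyl_le ⟨p, hp⟩)
      exact (Nat.Prime.pow_dvd_iff_le_factorization Fact.out (Nat.card_pos).ne').mp h1
    exact Nat.le_of_dvd Nat.card_pos hdvd
  apply Set.eq_univ_of_univ_subset
  have h1 : (Set.univ : Set G)
      = ((List.ofFn L).map (fun N : Subgroup G => (N : Set G))).prod := by
    rw [aux_listprod_coe _ (fun N hN => by
      obtain ⟨j, rfl⟩ := List.mem_ofFn.mp hN
      exact hLnorm j), ← hfold, hfold_top, Subgroup.coe_top]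
  rw [h1, aux_image_prod, List.map_ofFn, List.map_ofFn]
  refine aux_prod_mono _ _ fun i => ?_
  show (L i : Set G) ⊆ φ '' ((H i : Set F))
  rw [← Subgroup.coe_map]
  exact SetLike.coe_subset_coe.mpr (hLK i)
end

section
/- Let F be a group, let H₁, …, H_n be subgroups of F, and let p be a prime with p ≥ n. If for every surjective homomorphism φ : F → P onto a finite p-group P one has φ(H₁) ∪ ⋯ ∪ φ(H_n) = P, then there exists an index i such that Hᵢ is p-dense in F, i.e., φ(Hᵢ) = P for every surjective homomorphism φ : F → P onto a finite p-group. -/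
universe u

/-- A finite `p`-group cannot be covered by `n ≤ p` proper subgroups. -/
lemma pgroup_not_cover {Q : Type*} [Group Q] [Finite Q] {p : ℕ} (hp : p.Prime)
    (hQ : IsPGroup p Q) {n : ℕ} (hnp : n ≤ p) (K : Fin n → Subgroup Q)
    (hK : ∀ i, K i ≠ ⊤) : (⋃ i, (K i : Set Q)) ≠ Set.univ := by
  classical
  letI := Fintype.ofFinite Q
  intro h
  -- `1` is in the union, so there is at least one index
  have h1 : (1 : Q) ∈ ⋃ i, (K i : Set Q) := h ▸ Set.mem_univ 1
  obtain ⟨i₀, hi₀⟩ := Set.mem_iUnion.1 h1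
  -- each proper subgroup has `p * card ≤ card Q`
  have hpdvd : ∀ i, p * Nat.card (K i) ≤ Nat.card Q := by
    intro i
    haveI : Fact p.Prime := ⟨hp⟩
    obtain ⟨m, hm⟩ := hQ.index (K i)
    have hm1 : (K i).index ≠ 1 := by
      intro hcon
      exact hK i (Subgroup.index_eq_one.1 hcon)
    have hmpos : 1 ≤ m := by
      rcases Nat.eq_zero_or_pos m with rfl | h
      · rw [pow_zero] at hm
        exact absurd hm hm1
      · exact h
    have hple : p ≤ (K i).index := by
      calc p = p ^ 1 := (pow_one p).symm
        _ ≤ p ^ m := Nat.pow_le_pow_right hp.one_le hmpos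
        _ = (K i).index := hm.symm
    calc p * Nat.card (K i) ≤ (K i).index * Nat.card (K i) :=
          Nat.mul_le_mul_right _ hple
      _ = Nat.card Q := (K i).index_mul_card
  -- counting
  set m := Nat.card Q with hmdef
  have hmQ : m = Fintype.card Q := Nat.card_eq_fintype_card
  set T : Fin n → Finset Q := fun i => (Finset.univ.filter (· ∈ K i)).erase 1 with hT
  have hTcard : ∀ i, (T i).card = Nat.card (K i) - 1 := by
    intro i
    have h1mem : (1 : Q) ∈ Finset.univ.filter (· ∈ K i) := by
      simp [(K i).one_mem]
    rw [hT]
    simp only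
    rw [Finset.card_erase_of_mem h1mem, ← Fintype.card_subtype]
    rw [Nat.card_eq_fintype_card]
  have hsub : (Finset.univ : Finset Q) ⊆ insert 1 (Finset.univ.biUnion T) := by
    intro x _
    rcases eq_or_ne x 1 with rfl | hx
    · exact Finset.mem_insert_self _ _
    · have : x ∈ ⋃ i, (K i : Set Q) := h ▸ Set.mem_univ x
      obtain ⟨i, hi⟩ := Set.mem_iUnion.1 this
      refine Finset.mem_insert_of_mem (Finset.mem_biUnion.2 ⟨i, Finset.mem_univ i, ?_⟩)
      rw [hT]
      simp only
      exact Finset.mem_erase.2 ⟨hx, by simpa using hi⟩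
  have hcount : m ≤ 1 + ∑ i, (T i).card := by
    calc m = (Finset.univ : Finset Q).card := by rw [hmQ]; rfl
      _ ≤ (insert 1 (Finset.univ.biUnion T)).card := Finset.card_le_card hsub
      _ ≤ 1 + (Finset.univ.biUnion T).card := by
          have := Finset.card_insert_le (1 : Q) (Finset.univ.biUnion T)
          omega
      _ ≤ 1 + ∑ i, (T i).card := by
          have := Finset.card_biUnion_le (s := (Finset.univ : Finset (Fin n))) (t := T)
          omega
  -- bound the sum
  have hTbound : ∀ i, p * (T i).card ≤ m - p := by
    intro i
    rw [hTcard i]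
    have h1 := hpdvd i
    have h2 : 1 ≤ Nat.card (K i) := Nat.one_le_iff_ne_zero.2 Nat.card_pos.ne'
    have : p * (Nat.card (K i) - 1) = p * Nat.card (K i) - p := by
      rw [Nat.mul_sub, Nat.mul_one]
    omega
  have hsum : p * (∑ i, (T i).card) ≤ p * (m - p) := by
    rw [Finset.mul_sum]
    calc ∑ i, p * (T i).card ≤ ∑ _i : Fin n, (m - p) :=
          Finset.sum_le_sum fun i _ => hTbound i
      _ = n * (m - p) := by simp [Finset.sum_const, mul_comm]
      _ ≤ p * (m - p) := Nat.mul_le_mul_right _ hnp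
  have hS : (∑ i, (T i).card) ≤ m - p := Nat.le_of_mul_le_mul_left hsum hp.pos
  have hpm : p ≤ m := by
    have := hpdvd i₀
    have h2 : 1 ≤ Nat.card (K i₀) := Nat.one_le_iff_ne_zero.2 Nat.card_pos.ne'
    nlinarith
  have := hp.two_le
  omega

theorem statement10 {F : Type u} [Group F] {n : ℕ} (H : Fin n → Subgroup F)
    (p : ℕ) (hp : p.Prime) (hnp : n ≤ p)
    (hcov : ∀ (P : Type u) [Group P], Finite P → IsPGroup p P →
      ∀ φ : F →* P, Function.Surjective φ →
        (⋃ i, φ '' (H i : Set F)) = Set.univ) :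
    ∃ i, ∀ (P : Type u) [Group P], Finite P → IsPGroup p P →
      ∀ φ : F →* P, Function.Surjective φ → Subgroup.map φ (H i) = ⊤ := by
  by_contra hcon
  push_neg at hcon
  choose P instP finP pgP φ surjφ hne using hcon
  letI : ∀ i, Group (P i) := instP
  haveI : ∀ i, Finite (P i) := finP
  haveI : Fact p.Prime := ⟨hp⟩
  -- the product is a finite p-group
  haveI : Finite (∀ i, P i) := Pi.finite
  have hpgPi : IsPGroup p (∀ i, P i) := by
    rw [IsPGroup.iff_card]
    have : ∀ i, ∃ k, Nat.card (P i) = p ^ k := fun i => IsPGroup.iff_card.1 (pgP i)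
    choose k hk using this
    exact ⟨∑ i, k i, by rw [Nat.card_pi]; simp_rw [hk]; rw [Finset.prod_pow_eq_pow_sum]⟩
  set ψ : F →* ∀ i, P i := Pi.monoidHom φ with hψ
  set Q : Subgroup (∀ i, P i) := ψ.range with hQdef
  haveI : Finite Q := Subtype.finite
  have hQp : IsPGroup p Q := hpgPi.to_subgroup Q
  set ψ' : F →* Q := ψ.rangeRestrict with hψ'
  have hψ'surj : Function.Surjective ψ' := ψ.rangeRestrict_surjective
  -- coverage of Q
  have hcovQ := hcov Q inferInstance hQp ψ' hψ'surj
  set K : Fin n → Subgroup Q := fun i => Subgroup.map ψ' (H i) with hK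
  have hcovK : (⋃ i, (K i : Set Q)) = Set.univ := by
    rw [hK]
    simpa [Subgroup.coe_map] using hcovQ
  -- each K i is proper
  have hKne : ∀ i, K i ≠ ⊤ := by
    intro i htop
    apply hne i
    set π : Q →* P i := (Pi.evalMonoidHom P i).comp Q.subtype with hπ
    have hcomp : π.comp ψ' = φ i := by
      ext x
      rfl
    have hπsurj : Function.Surjective π := by
      intro y
      obtain ⟨x, hx⟩ := surjφ i y
      exact ⟨ψ' x, by rw [← hx, ← hcomp]; rfl⟩
    have : Subgroup.map (φ i) (H i) = Subgroup.map π (K i) := by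
      rw [hK]
      simp only
      rw [Subgroup.map_map, hcomp]
    rw [this, htop, Subgroup.map_top_of_surjective π hπsurj]
  exact pgroup_not_cover hp hQp hnp K hKne hcovK
end

section
/- Let P be a minimal non-Abelian finite p-group (non-Abelian, but every proper subgroup is Abelian). Then the index of the center satisfies [P : Z(P)] = p². -/
universe u

-- Aux: a coatom in a finite p-group has index p
lemma coatom_index {p : ℕ} [Fact p.Prime] {P : Type u} [Group P] [Finite P]
    (hP : IsPGroup p P) {M : Subgroup P} (hM : IsCoatom M) : M.index = p := by
  have hnil : Group.IsNilpotent P := hP.isNilpotent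
  have hnc : NormalizerCondition P := normalizerCondition_of_isNilpotent
  haveI : M.Normal := Subgroup.NormalizerCondition.normal_of_coatom M hnc hM
  set Q := P ⧸ M
  have hQ : IsPGroup p Q := hP.to_quotient M
  have hQne : Nat.card Q ≠ 1 := by
    have := hM.1
    simpa [Subgroup.index] using (fun h => this (Subgroup.index_eq_one.mp h))
  haveI : Nontrivial Q := by
    rcases Nat.card_eq_one_iff_unique.not.mp hQne with h
    refine Finite.one_lt_card_iff_nontrivial.mp ?_
    have h0 : Nat.card Q ≠ 0 := Nat.card_ne_zero.mpr ⟨⟨1⟩, inferInstance⟩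
    omega
  obtain ⟨n, hn⟩ := IsPGroup.iff_card.mp hQ
  have hdvd : p ∣ Nat.card Q := by
    rw [hn]
    refine dvd_pow_self p ?_
    rintro rfl
    simp at hn
    exact hQne hn
  obtain ⟨h, hh⟩ := exists_prime_orderOf_dvd_card' (G := Q) p hdvd
  have hh1 : h ≠ 1 := by
    intro e; rw [e, orderOf_one] at hh; exact (Fact.out : p.Prime).ne_one hh.symm
  set K := (Subgroup.zpowers h).comap (QuotientGroup.mk' M) with hK
  have hMK : M ≤ K := by
    intro x hx
    have : QuotientGroup.mk' M x = 1 := (QuotientGroup.eq_one_iff x).mpr hx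
    simp [hK, Subgroup.mem_comap, this, Subgroup.one_mem]
  obtain ⟨x, hx⟩ := QuotientGroup.mk'_surjective M h
  have hxK : x ∈ K := by simp [hK, Subgroup.mem_comap, hx, Subgroup.mem_zpowers]
  have hxM : x ∉ M := by
    intro hxm
    exact hh1 (hx ▸ (QuotientGroup.eq_one_iff x).mpr hxm)
  have hKtop : K = ⊤ := hM.2 K (lt_of_le_of_ne hMK (fun e => hxM (e ▸ hxK)))
  have hzp : ∀ q : Q, q ∈ Subgroup.zpowers h := by
    intro q
    obtain ⟨y, hy⟩ := QuotientGroup.mk'_surjective M q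
    have : y ∈ K := hKtop ▸ Subgroup.mem_top y
    rw [hK, Subgroup.mem_comap, hy] at this
    exact this
  have : Nat.card Q = orderOf h := (orderOf_eq_card_of_forall_mem_zpowers hzp).symm
  rw [Subgroup.index, this, hh]

theorem statement13 (p : ℕ) (hp : p.Prime) (P : Type u) [Group P] [Finite P]
    (hP : IsPGroup p P) (hna : ∃ a b : P, a * b ≠ b * a)
    (hmin : ∀ S : Subgroup P, S ≠ ⊤ → ∀ a ∈ S, ∀ b ∈ S, a * b = b * a) :
    (Subgroup.center P).index = p ^ 2 := by
  haveI : Fact p.Prime := ⟨hp⟩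
  obtain ⟨a, b, hab⟩ := hna
  -- the two centralizers
  set C := Subgroup.centralizer {a} with hCdef
  set D := Subgroup.centralizer {b} with hDdef
  have haC : a ∈ C := by
    rw [hCdef, Subgroup.mem_centralizer_iff]; rintro g rfl; rfl
  have hbD : b ∈ D := by
    rw [hDdef, Subgroup.mem_centralizer_iff]; rintro g rfl; rfl
  have hbC : b ∉ C := by
    intro hb
    rw [hCdef, Subgroup.mem_centralizer_iff] at hb
    exact hab (hb a rfl)
  have haD : a ∉ D := by
    intro ha
    rw [hDdef, Subgroup.mem_centralizer_iff] at ha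
    exact hab (ha b rfl).symm
  have hCtop : C ≠ ⊤ := fun h => hbC (h ▸ Subgroup.mem_top b)
  have hDtop : D ≠ ⊤ := fun h => haD (h ▸ Subgroup.mem_top a)
  -- centralizers of non-central elements are coatoms
  have key : ∀ x : P, ∀ X : Subgroup P, X = Subgroup.centralizer {x} → x ∈ X → X ≠ ⊤ →
      IsCoatom X := by
    intro x X hXdef hxX hXtop
    obtain hM | ⟨M, hM, hXM⟩ := eq_top_or_exists_le_coatom X
    · exact absurd hM hXtop
    have hMX : M ≤ X := by
      intro y hy
      rw [hXdef, Subgroup.mem_centralizer_iff]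
      rintro g rfl
      exact hmin M hM.1 g (hXM hxX) y hy
    rwa [le_antisymm hMX hXM] at hM
  have hCco : IsCoatom C := key a C hCdef haC hCtop
  have hDco : IsCoatom D := key b D hDdef hbD hDtop
  have hCidx : C.index = p := coatom_index hP hCco
  have hDidx : D.index = p := coatom_index hP hDco
  -- C is normal
  haveI : C.Normal :=
    Subgroup.NormalizerCondition.normal_of_coatom C
      (normalizerCondition_of_isNilpotent (h := hP.isNilpotent)) hCco
  -- C ⊔ D = ⊤
  have hsup : C ⊔ D = ⊤ := by
    refine hCco.2 _ (lt_of_le_of_ne le_sup_left ?_)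
    intro h
    exact hbC (h ▸ Subgroup.mem_sup_right hbD)
  -- center = C ⊓ D
  have hZ : Subgroup.center P = C ⊓ D := by
    apply le_antisymm
    · intro x hx
      rw [Subgroup.mem_center_iff] at hx
      refine Subgroup.mem_inf.mpr ⟨?_, ?_⟩ <;>
        · rw [Subgroup.mem_centralizer_iff]; rintro g rfl; exact hx _
    · intro x hx
      obtain ⟨hxC, hxD⟩ := Subgroup.mem_inf.mp hx
      have hE : C ⊔ D ≤ Subgroup.centralizer {x} := by
        refine sup_le ?_ ?_ <;>
          · intro c hc
            rw [Subgroup.mem_centralizer_iff]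
            rintro g rfl
            first
            | exact hmin C hCtop g hxC c hc
            | exact hmin D hDtop g hxD c hc
      rw [Subgroup.mem_center_iff]
      intro g
      have : g ∈ Subgroup.centralizer {x} := hE (hsup ▸ Subgroup.mem_top g)
      rw [Subgroup.mem_centralizer_iff] at this
      exact (this x rfl).symm
  -- index computation
  have h1 : (C ⊓ D).relIndex D * D.index = (C ⊓ D).index :=
    Subgroup.relIndex_mul_index inf_le_right
  have h2 : (C ⊓ D).relIndex D = C.relIndex D := Subgroup.inf_relIndex_right C D
  have h3 : C.relIndex D = C.index := by
    rw [← Subgroup.relIndex_sup_left, hsup, Subgroup.relIndex_top_right]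
  rw [hZ, ← h1, h2, h3, hCidx, hDidx, sq]
end

section
/- Let P be a finite p-group with [P : Z(P)] = p², and let X be a set of p+1 pairwise noncommuting elements of P. For x ∈ X let M_x = ⟨x, Z(P)⟩. Then each M_x is a maximal subgroup of index p, the M_x for distinct x ∈ X are distinct, M_x ∩ M_y = Z(P) for x ≠ y, and P = ⋃_{x ∈ X} M_x. -/
universe u

theorem statement14 (p : ℕ) (hp : p.Prime) (P : Type u) [Group P] [Finite P]
    (hP : IsPGroup p P) (hZ : (Subgroup.center P).index = p ^ 2)
    (X : Finset P) (hcard : X.card = p + 1)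
    (hnc : ∀ x ∈ X, ∀ y ∈ X, x ≠ y → x * y ≠ y * x)
    (M : P → Subgroup P)
    (hM : ∀ x, M x = Subgroup.closure ({x} ∪ (Subgroup.center P : Set P))) :
    (∀ x ∈ X, (M x).index = p ∧ IsCoatom (M x)) ∧
    (∀ x ∈ X, ∀ y ∈ X, x ≠ y → M x ≠ M y ∧ M x ⊓ M y = Subgroup.center P) ∧
    ∀ g : P, ∃ x ∈ X, g ∈ M x := by
  classical
  set Z := Subgroup.center P with hZdef
  -- basic membership facts
  have hxM : ∀ x : P, x ∈ M x := by
    intro x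
    rw [hM]
    exact Subgroup.subset_closure (Or.inl rfl)
  have hZM : ∀ x : P, Z ≤ M x := by
    intro x z hz
    rw [hM]
    exact Subgroup.subset_closure (Or.inr hz)
  -- each M x is abelian
  have hcomm : ∀ x : P, ∀ a ∈ M x, ∀ b ∈ M x, a * b = b * a := by
    intro x a ha b hb
    rw [hM] at ha hb
    refine Subgroup.closure_induction₂
      (p := fun a b _ _ => a * b = b * a) ?_ ?_ ?_ ?_ ?_ ?_ ?_ ha hb
    · rintro s t (rfl | hs) (rfl | ht)
      · rfl
      · exact Subgroup.mem_center_iff.mp ht s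
      · exact (Subgroup.mem_center_iff.mp hs t).symm
      · exact Subgroup.mem_center_iff.mp ht s
    · intro s _; simp
    · intro s _; simp
    · intro a b c _ _ _ h1 h2
      exact (Commute.mul_left h1 h2 : Commute _ _)
    · intro a b c _ _ _ h1 h2
      exact (Commute.mul_right h1 h2 : Commute _ _)
    · intro a b _ _ h
      exact ((Commute.inv_left h) : Commute _ _)
    · intro a b _ _ h
      exact ((Commute.inv_right h) : Commute _ _)
  have hp0 : 0 < p := hp.pos
  have hp2 : 1 < p + 1 := Nat.succ_lt_succ hp0
  -- existence of another element of X
  have hother : ∀ x ∈ X, ∃ y ∈ X, y ≠ x := by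
    intro x hx
    exact Finset.exists_mem_ne (by rw [hcard]; exact hp2) x
  -- elements of X are noncentral
  have hXnc : ∀ x ∈ X, x ∉ Z := by
    intro x hx hxZ
    obtain ⟨y, hy, hyx⟩ := hother x hx
    exact hnc x hx y hy (Ne.symm hyx) (Subgroup.mem_center_iff.mp hxZ y).symm
  -- M x ≠ ⊤
  have hMne : ∀ x ∈ X, M x ≠ ⊤ := by
    intro x hx htop
    obtain ⟨y, hy, hyx⟩ := hother x hx
    refine hnc x hx y hy (Ne.symm hyx) ?_
    exact hcomm x x (hxM x) y (htop ▸ Subgroup.mem_top y)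
  -- index of M x is p, and Z has relIndex p in M x
  have hidx : ∀ x ∈ X, (M x).index = p ∧ Z.relIndex (M x) = p := by
    intro x hx
    have hmul : Z.relIndex (M x) * (M x).index = p ^ 2 := by
      rw [Subgroup.relIndex_mul_index (hZM x), hZ]
    have h1 : (M x).index ≠ 1 := by
      simp only [ne_eq, Subgroup.index_eq_one]
      exact hMne x hx
    have h2 : Z.relIndex (M x) ≠ 1 := by
      simp only [ne_eq, Subgroup.relIndex_eq_one]
      intro hle
      exact hXnc x hx (hle (hxM x))
    have hdvd : Z.relIndex (M x) ∣ p ^ 2 := ⟨_, hmul.symm⟩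
    obtain ⟨i, hi, hie⟩ := (Nat.dvd_prime_pow hp).mp hdvd
    interval_cases i
    · rw [pow_zero] at hie; exact absurd hie h2
    · rw [hie, pow_one] at hmul ⊢
      constructor
      · have := hmul
        rw [pow_two] at this
        exact Nat.eq_of_mul_eq_mul_left hp0 this
      · rfl
    · rw [hie] at hmul
      have : (M x).index = 1 := by
        have hpos : 0 < p ^ 2 := pow_pos hp0 2
        nlinarith [hmul]
      exact absurd this h1
  -- maximality
  have hmax : ∀ x ∈ X, IsCoatom (M x) := by
    intro x hx
    refine ⟨hMne x hx, fun K hK => ?_⟩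
    have hle : M x ≤ K := hK.le
    have hmul : (M x).relIndex K * K.index = p := by
      rw [Subgroup.relIndex_mul_index hle, (hidx x hx).1]
    have h2 : (M x).relIndex K ≠ 1 := by
      simp only [ne_eq, Subgroup.relIndex_eq_one]
      exact fun h => absurd (le_antisymm hle h) hK.ne
    have : (M x).relIndex K = p := by
      rcases (Nat.Prime.eq_one_or_self_of_dvd hp _ ⟨_, hmul.symm⟩) with h | h
      · exact absurd h h2
      · exact h
    rw [this] at hmul
    have : K.index = 1 := Nat.eq_of_mul_eq_mul_left hp0 (by omega)
    exact Subgroup.index_eq_one.mp this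
  -- distinctness
  have hdist : ∀ x ∈ X, ∀ y ∈ X, x ≠ y → M x ≠ M y := by
    intro x hx y hy hxy heq
    refine hnc x hx y hy hxy ?_
    exact hcomm x x (hxM x) y (heq ▸ hxM y)
  -- intersection is the center
  have hinf : ∀ x ∈ X, ∀ y ∈ X, x ≠ y → M x ⊓ M y = Z := by
    intro x hx y hy hxy
    refine le_antisymm ?_ (le_inf (hZM x) (hZM y))
    by_contra hle
    have hZinf : Z ≤ M x ⊓ M y := le_inf (hZM x) (hZM y)
    have h2 : Z.relIndex (M x ⊓ M y) ≠ 1 := by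
      simp only [ne_eq, Subgroup.relIndex_eq_one]
      exact hle
    have hmul : Z.relIndex (M x ⊓ M y) * (M x ⊓ M y).relIndex (M x) = p := by
      rw [Subgroup.relIndex_mul_relIndex _ _ _ hZinf inf_le_left, (hidx x hx).2]
    have hrel : Z.relIndex (M x ⊓ M y) = p := by
      rcases (Nat.Prime.eq_one_or_self_of_dvd hp _ ⟨_, hmul.symm⟩) with h | h
      · exact absurd h h2
      · exact h
    rw [hrel] at hmul
    have h3 : (M x ⊓ M y).relIndex (M x) = 1 := Nat.eq_of_mul_eq_mul_left hp0 (by omega)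
    have h4 : M x ≤ M x ⊓ M y := Subgroup.relIndex_eq_one.mp h3
    have h5 : M x ≤ M y := h4.trans inf_le_right
    -- same index implies equality
    have hmul2 : (M x).relIndex (M y) * (M y).index = (M x).index := by
      rw [Subgroup.relIndex_mul_index h5]
    rw [(hidx x hx).1, (hidx y hy).1] at hmul2
    have h6 : (M x).relIndex (M y) = 1 := by
      have : (M x).relIndex (M y) * p = 1 * p := by omega
      exact Nat.eq_of_mul_eq_mul_right hp0 this
    have h7 : M y ≤ M x := Subgroup.relIndex_eq_one.mp h6
    exact hdist x hx y hy hxy (le_antisymm h5 h7)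
  refine ⟨fun x hx => ⟨(hidx x hx).1, hmax x hx⟩, fun x hx y hy hxy => ⟨hdist x hx y hy hxy, hinf x hx y hy hxy⟩, ?_⟩
  -- covering argument
  haveI : Fintype P := Fintype.ofFinite P
  set c := Nat.card Z with hc
  have hcpos : 0 < c := Nat.card_pos
  have hcardP : Nat.card P = p ^ 2 * c := by
    rw [← Subgroup.index_mul_card (H := Z), hZ]
  have hcardM : ∀ x ∈ X, Nat.card (M x) = p * c := by
    intro x hx
    have := Subgroup.index_mul_card (H := Z.subgroupOf (M x)) (G := M x)
    rw [show (Z.subgroupOf (M x)).index = Z.relIndex (M x) from rfl, (hidx x hx).2] at this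
    rw [← this, hc]
    congr 1
    exact Nat.card_congr (Subgroup.subgroupOfEquivOfLe (hZM x)).toEquiv
  -- finsets
  have hsubZ : ∀ x, (Z : Set P).toFinset ⊆ ((M x : Set P)).toFinset := by
    intro x
    simp only [Set.subset_toFinset, Set.coe_toFinset]
    exact hZM x
  have hZcard : (Z : Set P).toFinset.card = c := by
    rw [Set.toFinset_card, hc, Nat.card_eq_fintype_card]
    exact Fintype.card_congr (Equiv.refl _)
  have hMcard : ∀ x ∈ X, ((M x : Set P)).toFinset.card = p * c := by
    intro x hx
    rw [Set.toFinset_card, ← hcardM x hx, Nat.card_eq_fintype_card]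
    exact Fintype.card_congr (Equiv.refl _)
  set A : P → Finset P := fun x => ((M x : Set P)).toFinset \ (Z : Set P).toFinset with hA
  have hAcard : ∀ x ∈ X, (A x).card = p * c - c := by
    intro x hx
    rw [hA]
    rw [Finset.card_sdiff_of_subset (hsubZ x), hMcard x hx, hZcard]
  have hAdisj : ∀ x ∈ X, ∀ y ∈ X, x ≠ y → Disjoint (A x) (A y) := by
    intro x hx y hy hxy
    rw [Finset.disjoint_left]
    intro g hgx hgy
    simp only [hA, Finset.mem_sdiff, Set.mem_toFinset, SetLike.mem_coe] at hgx hgy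
    have : g ∈ M x ⊓ M y := ⟨hgx.1, hgy.1⟩
    rw [hinf x hx y hy hxy] at this
    exact hgx.2 this
  set B : Finset P := X.biUnion A with hB
  have hBcard : B.card = (p + 1) * (p * c - c) := by
    rw [hB, Finset.card_biUnion hAdisj, ← hcard]
    rw [Finset.sum_congr rfl hAcard]
    simp [Finset.sum_const, mul_comm]
  set T : Finset P := (Z : Set P).toFinset ∪ B with hT
  have hTdisj : Disjoint (Z : Set P).toFinset B := by
    rw [Finset.disjoint_left]
    intro g hg hgB
    rw [hB, Finset.mem_biUnion] at hgB
    obtain ⟨x, hx, hgx⟩ := hgB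
    simp only [hA, Finset.mem_sdiff] at hgx
    exact hgx.2 hg
  have hTcard : T.card = p ^ 2 * c := by
    rw [hT, Finset.card_union_of_disjoint hTdisj, hZcard, hBcard]
    obtain ⟨q, rfl⟩ : ∃ q, p = q + 1 := ⟨p - 1, by omega⟩
    have : (q + 1) * c - c = q * c := by
      have : (q + 1) * c = q * c + c := by ring
      omega
    rw [this]
    ring
  have hTuniv : T = Finset.univ := by
    apply Finset.eq_univ_of_card
    rw [hTcard, ← hcardP, Nat.card_eq_fintype_card]
  intro g
  have hgT : g ∈ T := hTuniv ▸ Finset.mem_univ g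
  rw [hT, Finset.mem_union] at hgT
  rcases hgT with hg | hg
  · obtain ⟨x, hx⟩ := Finset.card_pos.mp (by rw [hcard]; exact Nat.succ_pos p : 0 < X.card)
    exact ⟨x, hx, hZM x (by simpa using hg)⟩
  · rw [hB, Finset.mem_biUnion] at hg
    obtain ⟨x, hx, hgx⟩ := hg
    simp only [hA, Finset.mem_sdiff, Set.mem_toFinset, SetLike.mem_coe] at hgx
    exact ⟨x, hx, hgx.1⟩
end

section
/- Let F be a group, g ∈ F, and H₁, …, H_n subgroups of F. Then the nil-closure of the translate gH₁H₂⋯H_n equals g times the nil-closure of H₁H₂⋯H_n, and the latter equals the intersection over all primes p of the p-closures of H₁H₂⋯H_n. Consequently, for a finite union ⋃_{j=1}^{s} g_j G_{1,j}⋯G_{r_j,j}, the nil-closure equals ⋃_{j=1}^{s} g_j · Cl_nil(G_{1,j}⋯G_{r_j,j}). -/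
open Pointwise Topology

universe u

section Top
variable {F : Type u} [Group F] {V : ∀ (K : Type u) [Group K], Prop}

lemma proTopology_isOpen_smul (g : F) {U : Set F}
    (hU : IsOpen[proTopology F V] U) : IsOpen[proTopology F V] (g • U) := by
  induction hU with
  | basic u hu =>
      obtain ⟨a, N, hN, hV, rfl⟩ := hu
      rw [smul_smul]
      exact .basic _ ⟨g * a, N, hN, hV, rfl⟩
  | univ => rw [Set.smul_set_univ]; exact TopologicalSpace.GenerateOpen.univ
  | inter u v _ _ ihu ihv =>
      rw [Set.smul_set_inter]
      exact TopologicalSpace.GenerateOpen.inter _ _ ihu ihv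
  | sUnion S _ ih =>
      have h : g • ⋃₀ S = ⋃₀ ((fun s => g • s) '' S) := by
        rw [Set.sUnion_image, Set.smul_set_sUnion]
      rw [h]
      exact TopologicalSpace.GenerateOpen.sUnion _ (by
        rintro t ⟨u, hu, rfl⟩
        exact ih u hu)

lemma proTopology_closure_smul (g : F) (S : Set F) :
    @closure F (proTopology F V) (g • S) = g • @closure F (proTopology F V) S := by
  letI := proTopology F V
  have key : ∀ (a : F) (T : Set F), a • closure T ⊆ closure (a • T) := by
    intro a T
    have h1 : IsClosed (a⁻¹ • closure (a • T)) := by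
      rw [← isOpen_compl_iff, ← Set.smul_set_compl]
      exact proTopology_isOpen_smul a⁻¹ (isOpen_compl_iff.mpr isClosed_closure)
    have h2 : T ⊆ a⁻¹ • closure (a • T) := by
      intro t ht
      rw [Set.mem_inv_smul_set_iff]
      exact subset_closure (Set.smul_mem_smul_set ht)
    have h3 := closure_minimal h2 h1
    calc a • closure T ⊆ a • (a⁻¹ • closure (a • T)) := Set.smul_set_mono h3
      _ = closure (a • T) := smul_inv_smul a _
  refine subset_antisymm ?_ (key g S)
  have h4 := key g⁻¹ (g • S)
  rw [inv_smul_smul] at h4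
  calc closure (g • S) = g • (g⁻¹ • closure (g • S)) := (smul_inv_smul g _).symm
    _ ⊆ g • closure S := Set.smul_set_mono h4

lemma proTopology_closure_iUnion {κ : Type*} [Finite κ] (T : κ → Set F) :
    @closure F (proTopology F V) (⋃ j, T j) = ⋃ j, @closure F (proTopology F V) (T j) := by
  letI := proTopology F V
  refine subset_antisymm (closure_minimal (Set.iUnion_mono fun j => subset_closure)
    (isClosed_iUnion_of_finite fun j => isClosed_closure))
    (Set.iUnion_subset fun j => closure_mono (Set.subset_iUnion T j))

lemma singleton_mul_eq_smul (a : F) (S : Set F) : {a} * S = a • S := by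
  rw [Set.singleton_mul]; rfl

end Top
section ClosureFormula
variable {F : Type u} [Group F] {V : ∀ (K : Type u) [Group K], Prop}

lemma proTopology_nbhd
    (htriv : ∀ (K : Type u) [Group K], Subsingleton K → V K)
    (hinter : ∀ (N₁ N₂ : Subgroup F) (h₁ : N₁.Normal) (h₂ : N₂.Normal),
      (letI := h₁; V (F ⧸ N₁)) → (letI := h₂; V (F ⧸ N₂)) →
      (letI := h₁; letI := h₂; V (F ⧸ (N₁ ⊓ N₂))))
    {U : Set F} (hU : IsOpen[proTopology F V] U) :
    ∀ x ∈ U, ∃ (N : Subgroup F) (hN : N.Normal),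
      (letI := hN; V (F ⧸ N)) ∧ x • (N : Set F) ⊆ U := by
  induction hU with
  | basic u hu =>
      rintro x hx
      obtain ⟨a, N, hN, hV, rfl⟩ := hu
      refine ⟨N, hN, hV, ?_⟩
      obtain ⟨m, hm, rfl⟩ := hx
      rintro - ⟨m', hm', rfl⟩
      exact ⟨m * m', N.mul_mem hm hm', by simp only [smul_eq_mul, mul_assoc]⟩
  | univ =>
      intro x _
      have hsub : Subsingleton (F ⧸ (⊤ : Subgroup F)) := by
        constructor
        intro a b
        obtain ⟨a, rfl⟩ := QuotientGroup.mk_surjective a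
        obtain ⟨b, rfl⟩ := QuotientGroup.mk_surjective b
        rw [QuotientGroup.eq]
        exact Subgroup.mem_top _
      exact ⟨⊤, inferInstance, htriv _ hsub, Set.subset_univ _⟩
  | inter u v _ _ ihu ihv =>
      rintro x ⟨hxu, hxv⟩
      obtain ⟨N₁, h₁, hV₁, hs₁⟩ := ihu x hxu
      obtain ⟨N₂, h₂, hV₂, hs₂⟩ := ihv x hxv
      refine ⟨N₁ ⊓ N₂, letI := h₁; letI := h₂; inferInstance,
        hinter N₁ N₂ h₁ h₂ hV₁ hV₂, ?_⟩
      intro y hy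
      obtain ⟨m, hm, rfl⟩ := hy
      exact ⟨hs₁ ⟨m, hm.1, rfl⟩, hs₂ ⟨m, hm.2, rfl⟩⟩
  | sUnion S _ ih =>
      rintro x ⟨u, hu, hxu⟩
      obtain ⟨N, hN, hV, hsub⟩ := ih u hu x hxu
      exact ⟨N, hN, hV, hsub.trans (Set.subset_sUnion_of_mem hu)⟩

lemma proTopology_closure_eq
    (htriv : ∀ (K : Type u) [Group K], Subsingleton K → V K)
    (hinter : ∀ (N₁ N₂ : Subgroup F) (h₁ : N₁.Normal) (h₂ : N₂.Normal),
      (letI := h₁; V (F ⧸ N₁)) → (letI := h₂; V (F ⧸ N₂)) →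
      (letI := h₁; letI := h₂; V (F ⧸ (N₁ ⊓ N₂))))
    (S : Set F) :
    @closure F (proTopology F V) S =
      ⋂ (N : Subgroup F), ⋂ (hN : N.Normal), ⋂ (_ : letI := hN; V (F ⧸ N)),
        S * (N : Set F) := by
  letI := proTopology F V
  apply subset_antisymm
  · refine closure_minimal ?_ ?_
    · intro x hx
      simp only [Set.mem_iInter]
      intro N hN hV
      exact ⟨x, hx, 1, N.one_mem, mul_one x⟩
    · refine isClosed_iInter fun N => isClosed_iInter fun hN => isClosed_iInter fun hV => ?_
      rw [← isOpen_compl_iff]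
      have hrw : (S * (N : Set F))ᶜ = ⋃₀ {U | ∃ y ∈ (S * (N : Set F))ᶜ, U = y • (N : Set F)} := by
        ext z
        constructor
        · intro hz
          exact ⟨z • (N : Set F), ⟨z, hz, rfl⟩, ⟨1, N.one_mem, by simp⟩⟩
        · rintro ⟨-, ⟨y, hy, rfl⟩, ⟨m, hm, rfl⟩⟩
          intro hmem
          apply hy
          obtain ⟨a, ha, b, hb, hab⟩ := hmem
          refine ⟨a, ha, b * m⁻¹, N.mul_mem hb (N.inv_mem hm), ?_⟩
          simp only [smul_eq_mul] at hab
          show a * (b * m⁻¹) = y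
          rw [← mul_assoc, hab, mul_assoc, mul_inv_cancel, mul_one]
      rw [hrw]
      exact TopologicalSpace.GenerateOpen.sUnion _ (by
        rintro t ⟨y, _, rfl⟩
        exact .basic _ ⟨y, N, hN, hV, rfl⟩)
  · intro x hx
    simp only [Set.mem_iInter] at hx
    rw [mem_closure_iff]
    intro o ho hxo
    obtain ⟨N, hN, hV, hsub⟩ := proTopology_nbhd htriv hinter ho x hxo
    obtain ⟨a, ha, b, hb, hab⟩ := hx N hN hV
    refine ⟨a, hsub ⟨b⁻¹, N.inv_mem hb, ?_⟩, ha⟩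
    show x * b⁻¹ = a
    have hab' : a * b = x := hab
    rw [← hab', mul_inv_cancel_right]

end ClosureFormula

section Varieties
variable {F : Type u} [Group F]

lemma htriv_nilpotent : ∀ (K : Type u) [Group K], Subsingleton K → nilpotentVariety K := by
  intro K _ hs
  exact ⟨Finite.of_subsingleton, Group.isNilpotent_of_subsingleton⟩

lemma htriv_p (p : ℕ) : ∀ (K : Type u) [Group K], Subsingleton K → pVariety p K := by
  intro K _ hs
  refine ⟨Finite.of_subsingleton, fun g => ⟨0, ?_⟩⟩
  rw [pow_zero, pow_one]
  exact Subsingleton.elim g 1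

lemma hinter_nilpotent : ∀ (N₁ N₂ : Subgroup F) (h₁ : N₁.Normal) (h₂ : N₂.Normal),
    (letI := h₁; nilpotentVariety (F ⧸ N₁)) → (letI := h₂; nilpotentVariety (F ⧸ N₂)) →
    (letI := h₁; letI := h₂; nilpotentVariety (F ⧸ (N₁ ⊓ N₂))) := by
  intro N₁ N₂ h₁ h₂ hV₁ hV₂
  letI := h₁; letI := h₂
  set φ := (QuotientGroup.mk' N₁).prod (QuotientGroup.mk' N₂) with hφ
  have hker : φ.ker = N₁ ⊓ N₂ := by
    rw [hφ, MonoidHom.ker_prod, QuotientGroup.ker_mk', QuotientGroup.ker_mk']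
  let e : F ⧸ (N₁ ⊓ N₂) ≃* φ.range :=
    (QuotientGroup.quotientMulEquivOfEq hker.symm).trans (QuotientGroup.quotientKerEquivRange φ)
  haveI : Finite (F ⧸ N₁) := hV₁.1
  haveI : Finite (F ⧸ N₂) := hV₂.1
  haveI : Group.IsNilpotent (F ⧸ N₁) := hV₁.2
  haveI : Group.IsNilpotent (F ⧸ N₂) := hV₂.2
  exact ⟨Finite.of_equiv _ e.symm.toEquiv, (Group.isNilpotent_congr e).mpr inferInstance⟩

lemma hinter_p (p : ℕ) : ∀ (N₁ N₂ : Subgroup F) (h₁ : N₁.Normal) (h₂ : N₂.Normal),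
    (letI := h₁; pVariety p (F ⧸ N₁)) → (letI := h₂; pVariety p (F ⧸ N₂)) →
    (letI := h₁; letI := h₂; pVariety p (F ⧸ (N₁ ⊓ N₂))) := by
  intro N₁ N₂ h₁ h₂ hV₁ hV₂
  letI := h₁; letI := h₂
  set φ := (QuotientGroup.mk' N₁).prod (QuotientGroup.mk' N₂) with hφ
  have hker : φ.ker = N₁ ⊓ N₂ := by
    rw [hφ, MonoidHom.ker_prod, QuotientGroup.ker_mk', QuotientGroup.ker_mk']
  let e : F ⧸ (N₁ ⊓ N₂) ≃* φ.range :=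
    (QuotientGroup.quotientMulEquivOfEq hker.symm).trans (QuotientGroup.quotientKerEquivRange φ)
  haveI : Finite (F ⧸ N₁) := hV₁.1
  haveI : Finite (F ⧸ N₂) := hV₂.1
  have hprod : IsPGroup p ((F ⧸ N₁) × (F ⧸ N₂)) := by
    intro gg
    obtain ⟨k, hk⟩ := hV₁.2 gg.1
    obtain ⟨l, hl⟩ := hV₂.2 gg.2
    refine ⟨k + l, Prod.ext ?_ ?_⟩
    · rw [Prod.pow_fst, Prod.fst_one, pow_add, pow_mul, hk, one_pow]
    · rw [Prod.pow_snd, Prod.snd_one, pow_add, Nat.mul_comm, pow_mul, hl, one_pow]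
  exact ⟨Finite.of_equiv _ e.symm.toEquiv, (hprod.to_subgroup φ.range).of_equiv e.symm⟩

end Varieties
section Pieces

lemma pow_eq_left_of_commute {G : Type*} [Group G] {a b : G} (hc : Commute a b)
    {nn mm : ℕ} (ha : a ^ nn = 1) (hb : b ^ mm = 1) (hco : Nat.Coprime nn mm) :
    ∃ j : ℕ, (a * b) ^ j = a := by
  obtain ⟨j, hj1, hj2⟩ := Nat.chineseRemainder hco 1 0
  refine ⟨j, ?_⟩
  rw [hc.mul_pow]
  have hbj : b ^ j = 1 := by
    have h1 : orderOf b ∣ mm := orderOf_dvd_of_pow_eq_one hb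
    have h2 : mm ∣ j := (Nat.modEq_zero_iff_dvd).mp hj2
    exact orderOf_dvd_iff_pow_eq_one.mp (h1.trans h2)
  have haj : a ^ j = a := by
    have h1 : orderOf a ∣ nn := orderOf_dvd_of_pow_eq_one ha
    have h2 := (pow_eq_pow_iff_modEq (x := a) (n := j) (m := 1)).mpr (hj1.of_dvd h1)
    simpa using h2
  rw [haj, hbj, mul_one]

lemma isPGroup_pi_s18 {η : Type*} [Finite η] {Ks : η → Type*} [∀ j, Group (Ks j)] {p : ℕ}
    (h : ∀ j, IsPGroup p (Ks j)) : IsPGroup p (∀ j, Ks j) := by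
  haveI := Fintype.ofFinite η
  intro f
  choose k hk using fun j => h j (f j)
  refine ⟨Finset.univ.sup k, ?_⟩
  funext j
  rw [Pi.pow_apply, Pi.one_apply]
  obtain ⟨c, hc⟩ : p ^ k j ∣ p ^ Finset.univ.sup k :=
    pow_dvd_pow _ (Finset.le_sup (Finset.mem_univ j))
  rw [hc, pow_mul, hk j, one_pow]

lemma mulSingle_mem_of_mem_s18 {ι' : Type*} [Fintype ι'] [DecidableEq ι'] {Gp : ι' → Type*}
    [∀ q, Group (Gp q)] (pr : ι' → ℕ) (hpr : ∀ q, (pr q).Prime)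
    (hinj : Function.Injective pr) (hG : ∀ q, IsPGroup (pr q) (Gp q))
    (A : Subgroup (∀ q, Gp q)) {w : ∀ q, Gp q} (hw : w ∈ A) (q : ι') :
    Pi.mulSingle q (w q) ∈ A := by
  classical
  set a : ∀ r, Gp r := Pi.mulSingle q (w q) with hadef
  set b : ∀ r, Gp r := fun r => if r = q then 1 else w r with hbdef
  have hab : a * b = w := by
    funext r
    rw [Pi.mul_apply]
    by_cases h : r = q
    · subst h; rw [hadef, hbdef]; simp
    · rw [hadef, hbdef]; simp [h, Pi.mulSingle_eq_of_ne h]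
  have hc : Commute a b := by
    show a * b = b * a
    funext r
    rw [Pi.mul_apply, Pi.mul_apply]
    by_cases h : r = q
    · subst h; rw [hbdef]; simp
    · rw [hadef]; simp [Pi.mulSingle_eq_of_ne h]
  obtain ⟨k, hk⟩ := hG q (w q)
  have ha : a ^ (pr q ^ k) = 1 := by
    show (MonoidHom.mulSingle Gp q) (w q) ^ (pr q ^ k) = 1
    rw [← map_pow, hk, map_one]
  choose kk hkk using fun r => hG r (w r)
  set m : ℕ := ∏ r ∈ Finset.univ.erase q, pr r ^ kk r with hm
  have hbm : b ^ m = 1 := by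
    funext r
    rw [Pi.pow_apply, Pi.one_apply]
    by_cases h : r = q
    · rw [hbdef]; simp [h]
    · obtain ⟨c, hc'⟩ : pr r ^ kk r ∣ m :=
        Finset.dvd_prod_of_mem _ (Finset.mem_erase.mpr ⟨h, Finset.mem_univ r⟩)
      rw [hbdef]
      show (if r = q then 1 else w r) ^ m = 1
      rw [if_neg h, hc', pow_mul, hkk r, one_pow]
  have hco : Nat.Coprime (pr q ^ k) m := by
    apply Nat.Coprime.pow_left
    rw [hm, Nat.coprime_prod_right_iff]
    intro r hr
    exact Nat.Coprime.pow_right _ ((Nat.coprime_primes (hpr q) (hpr r)).mpr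
      (fun h => (Finset.mem_erase.mp hr).1 (hinj h.symm)))
  obtain ⟨j, hj⟩ := pow_eq_left_of_commute hc ha hbm hco
  have hwj : w ^ j ∈ A := A.pow_mem hw j
  show a ∈ A
  rw [← hj, hab]
  exact hwj

lemma mem_listProd_ofFn {M : Type*} [Monoid M] :
    ∀ {n : ℕ} (T : Fin n → Set M) (x : M),
      x ∈ (List.ofFn T).prod ↔
        ∃ c : Fin n → M, (∀ i, c i ∈ T i) ∧ (List.ofFn c).prod = x := by
  intro n
  induction n with
  | zero =>
      intro T x
      simp only [List.ofFn_zero, List.prod_nil]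
      constructor
      · intro hx
        exact ⟨fun i => i.elim0, fun i => i.elim0, by simpa using hx.symm⟩
      · rintro ⟨c, -, rfl⟩
        simp
  | succ n ih =>
      intro T x
      rw [List.ofFn_succ, List.prod_cons]
      constructor
      · intro hx
        obtain ⟨a, ha, bb, hbb, rfl⟩ := hx
        obtain ⟨c', hc', hprod⟩ := (ih _ _).mp hbb
        refine ⟨Fin.cons a c', ?_, ?_⟩
        · intro i
          refine Fin.cases ?_ ?_ i
          · simpa using ha
          · intro i'; simpa using hc' i'
        · rw [List.ofFn_succ, List.prod_cons, Fin.cons_zero]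
          have he : (fun i : Fin n => (Fin.cons a c' : Fin (n+1) → M) i.succ) = c' := by
            funext i'; simp
          rw [he, hprod]
      · rintro ⟨c, hc, rfl⟩
        rw [List.ofFn_succ, List.prod_cons]
        refine ⟨c 0, hc 0, (List.ofFn fun i : Fin n => c i.succ).prod, ?_, rfl⟩
        exact (ih _ _).mpr ⟨fun i => c i.succ, fun i => hc i.succ, rfl⟩

lemma image_listProd {M N₀ : Type*} [Monoid M] [Monoid N₀] (φ : M →* N₀) :
    ∀ l : List (Set M), φ '' l.prod = (l.map fun s => φ '' s).prod := by
  intro l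
  induction l with
  | nil => simp [Set.image_one, Set.singleton_one]
  | cons hd tl ihl => simp only [List.prod_cons, List.map_cons, Set.image_mul, ihl]

lemma mem_mul_ker {F' Q : Type*} [Group F'] [Group Q] (φ : F' →* Q) {S : Set F'} {x : F'}
    (h : φ x ∈ φ '' S) : x ∈ S * (φ.ker : Set F') := by
  obtain ⟨s, hs, hsx⟩ := h
  have hker : s⁻¹ * x ∈ (φ.ker : Set F') := by
    show s⁻¹ * x ∈ φ.ker
    rw [MonoidHom.mem_ker, map_mul, map_inv, hsx, inv_mul_cancel]
  have := Set.mul_mem_mul hs hker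
  rwa [mul_inv_cancel_left] at this

end Pieces
section LemmaD

lemma nilpotent_component_reduction {Q : Type u} [Group Q] [Finite Q] [Group.IsNilpotent Q]
    {n : ℕ} (K : Fin n → Subgroup Q) (y : Q)
    (hy : ∀ (p : ℕ), p.Prime → ∀ (M : Subgroup Q) (hM : M.Normal),
      (letI := hM; IsPGroup p (Q ⧸ M)) →
      y ∈ (List.ofFn fun i => (K i : Set Q)).prod * (M : Set Q)) :
    y ∈ (List.ofFn fun i => (K i : Set Q)).prod := by
  classical
  obtain ⟨e⟩ := ((isNilpotent_of_finite_tfae (G := Q)).out 0 4).mp ‹Group.IsNilpotent Q›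
  set ι := ((Nat.card Q).primeFactors : Finset ℕ) with hι
  let Gp : ι → Type u := fun p => ∀ P : Sylow (p : ℕ) Q, (↑P : Subgroup Q)
  have hprime : ∀ p : ι, Nat.Prime (p : ℕ) := fun p => Nat.prime_of_mem_primeFactors p.2
  have hGp : ∀ p : ι, IsPGroup (p : ℕ) (Gp p) := by
    intro p
    haveI : Fact (Nat.Prime (p : ℕ)) := ⟨hprime p⟩
    exact isPGroup_pi_s18 fun P => P.isPGroup'
  let A : Fin n → Subgroup (∀ p : ι, Gp p) := fun i => (K i).map e.symm.toMonoidHom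
  set z := e.symm y with hz
  have claim : ∀ p : ι, ∃ d : Fin n → (∀ q : ι, Gp q),
      (∀ i, d i ∈ A i) ∧ (List.ofFn fun i => d i p).prod = z p := by
    intro p
    haveI : Fact (Nat.Prime (p : ℕ)) := ⟨hprime p⟩
    set ρ : Q →* Gp p := (Pi.evalMonoidHom Gp p).comp e.symm.toMonoidHom with hρ
    have hρsurj : Function.Surjective ρ := by
      intro v
      refine ⟨e (Pi.mulSingle p v), ?_⟩
      show (e.symm (e (Pi.mulSingle p v))) p = v
      rw [MulEquiv.symm_apply_apply, Pi.mulSingle_eq_same]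
    have hMnormal : ρ.ker.Normal := ρ.normal_ker
    have hQM : letI := hMnormal; IsPGroup (p : ℕ) (Q ⧸ ρ.ker) := by
      letI := hMnormal
      exact (hGp p).of_equiv (QuotientGroup.quotientKerEquivOfSurjective ρ hρsurj).symm
    obtain ⟨a, ha, t, ht, hat⟩ := hy (p : ℕ) (hprime p) ρ.ker hMnormal hQM
    obtain ⟨c, hc, hcprod⟩ := (mem_listProd_ofFn _ _).mp ha
    refine ⟨fun i => e.symm (c i), fun i => Subgroup.mem_map_of_mem _ (hc i), ?_⟩
    have h1 : (List.ofFn fun i => (e.symm (c i)) p).prod = ρ ((List.ofFn c).prod) := by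
      rw [map_list_prod ρ, List.map_ofFn]
      rfl
    have h2 : z p = ρ a := by
      have ht' : ρ t = 1 := ht
      have hat' : a * t = y := hat
      have hρy : ρ y = ρ a * ρ t := by rw [← map_mul, hat']
      show ρ y = ρ a
      rw [hρy, ht', mul_one]
    rw [h1, hcprod, ← h2]
  choose d hd1 hd2 using claim
  set b : Fin n → (∀ q : ι, Gp q) := fun i q => d q i q with hb
  have hbA : ∀ i, b i ∈ A i := by
    intro i
    have hnp := Finset.noncommProd_mulSingle (b i)
    rw [← hnp]
    refine Submonoid.noncommProd_mem (A i).toSubmonoid _ _ _ ?_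
    intro q _
    exact mulSingle_mem_of_mem_s18 (fun p : ι => (p : ℕ)) hprime Subtype.val_injective hGp
      (A i) (hd1 q i) q
  have hzb : (List.ofFn b).prod = z := by
    funext q
    rw [Pi.list_prod_apply q (List.ofFn b), List.map_ofFn]
    exact hd2 q
  have hzmem : z ∈ (List.ofFn fun i => ((A i : Subgroup _) : Set (∀ q : ι, Gp q))).prod :=
    (mem_listProd_ofFn _ _).mpr ⟨b, hbA, hzb⟩
  have himg : e z ∈ ⇑e.toMonoidHom '' (List.ofFn fun i => ((A i : Subgroup _) : Set _)).prod :=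
    Set.mem_image_of_mem _ hzmem
  rw [image_listProd e.toMonoidHom, List.map_ofFn] at himg
  have hAi : ((fun s => ⇑e.toMonoidHom '' s) ∘ fun i => ((A i : Subgroup _) : Set _)) =
      fun i => (K i : Set Q) := by
    funext i
    show ⇑e.toMonoidHom '' (((K i).map e.symm.toMonoidHom : Subgroup _) : Set _) = _
    rw [Subgroup.coe_map, ← Set.image_comp]
    have hcomp : (⇑e.toMonoidHom ∘ ⇑e.symm.toMonoidHom) = id := by
      funext x
      exact e.apply_symm_apply x
    rw [hcomp, Set.image_id]
  rw [hAi] at himg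
  have hz' : e z = y := by rw [hz, MulEquiv.apply_symm_apply]
  rwa [hz'] at himg

end LemmaD
lemma closure_singleton_mul {F : Type u} [Group F] {V : ∀ (K : Type u) [Group K], Prop}
    (a : F) (S : Set F) :
    @closure F (proTopology F V) ({a} * S) = {a} * @closure F (proTopology F V) S := by
  rw [singleton_mul_eq_smul, singleton_mul_eq_smul, proTopology_closure_smul]

theorem statement18 {F : Type u} [Group F] (g : F) {n : ℕ} (H : Fin n → Subgroup F)
    {s : ℕ} (gs : Fin s → F) (r : Fin s → ℕ) (Gs : ∀ j : Fin s, Fin (r j) → Subgroup F) :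
    (@closure F (proTopology F nilpotentVariety)
        ({g} * (List.ofFn fun i => (H i : Set F)).prod) =
      {g} * @closure F (proTopology F nilpotentVariety)
        ((List.ofFn fun i => (H i : Set F)).prod)) ∧
    (@closure F (proTopology F nilpotentVariety)
        ((List.ofFn fun i => (H i : Set F)).prod) =
      ⋂ (p : ℕ) (_ : p.Prime), @closure F (proTopology F (pVariety p))
        ((List.ofFn fun i => (H i : Set F)).prod)) ∧
    (@closure F (proTopology F nilpotentVariety)
        (⋃ j, {gs j} * (List.ofFn fun i => (Gs j i : Set F)).prod) =
      ⋃ j, {gs j} * @closure F (proTopology F nilpotentVariety)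
        ((List.ofFn fun i => (Gs j i : Set F)).prod)) := by
  refine ⟨closure_singleton_mul g _, ?_, ?_⟩
  · -- part 2
    set S := (List.ofFn fun i => (H i : Set F)).prod with hS
    have hnilf := proTopology_closure_eq (F := F) htriv_nilpotent hinter_nilpotent S
    have hpf : ∀ p : ℕ, @closure F (proTopology F (pVariety p)) S =
        ⋂ (N : Subgroup F), ⋂ (hN : N.Normal), ⋂ (_ : letI := hN; pVariety p (F ⧸ N)),
          S * (N : Set F) :=
      fun p => proTopology_closure_eq (F := F) (htriv_p p) (hinter_p p) S
    apply subset_antisymm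
    · intro x hx
      simp only [Set.mem_iInter]
      intro p hp
      rw [hpf p]
      simp only [Set.mem_iInter]
      intro N hN hV
      rw [hnilf] at hx
      simp only [Set.mem_iInter] at hx
      refine hx N hN ?_
      letI := hN
      haveI : Finite (F ⧸ N) := hV.1
      haveI : Fact p.Prime := ⟨hp⟩
      exact ⟨hV.1, hV.2.isNilpotent⟩
    · intro x hx
      simp only [Set.mem_iInter] at hx
      rw [hnilf]
      simp only [Set.mem_iInter]
      intro N hN hVnil
      letI := hN
      haveI : Finite (F ⧸ N) := hVnil.1
      haveI : Group.IsNilpotent (F ⧸ N) := hVnil.2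
      set π := QuotientGroup.mk' N with hπ
      have himg : ⇑π '' S = (List.ofFn fun i => (((H i).map π : Subgroup _) : Set (F ⧸ N))).prod := by
        rw [hS, image_listProd π, List.map_ofFn]
        have hcf : ((fun s => ⇑π '' s) ∘ fun i => ((H i : Subgroup F) : Set F)) =
            fun i => (((H i).map π : Subgroup _) : Set (F ⧸ N)) := by
          funext i
          show ⇑π '' ((H i : Subgroup F) : Set F) = _
          exact (Subgroup.coe_map π (H i)).symm
        rw [hcf]
      have hy : ∀ (p : ℕ), p.Prime → ∀ (M : Subgroup (F ⧸ N)) (hM : M.Normal),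
          (letI := hM; IsPGroup p ((F ⧸ N) ⧸ M)) →
          π x ∈ (List.ofFn fun i => (((H i).map π : Subgroup _) : Set (F ⧸ N))).prod
            * (M : Set (F ⧸ N)) := by
        intro p hp M hM hPG
        letI := hM
        have hNM : (M.comap π).Normal := hM.comap π
        set σ := (QuotientGroup.mk' M).comp π with hσ
        have hkerσ : σ.ker = M.comap π := by
          rw [hσ, ← MonoidHom.comap_ker, QuotientGroup.ker_mk']
        have hVp : letI := hNM; pVariety p (F ⧸ M.comap π) := by
          letI := hNM
          have hσsurj : Function.Surjective σ :=
            (QuotientGroup.mk'_surjective M).comp (QuotientGroup.mk'_surjective N)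
          let e2 : F ⧸ σ.ker ≃* (F ⧸ N) ⧸ M :=
            QuotientGroup.quotientKerEquivOfSurjective σ hσsurj
          let e3 : F ⧸ M.comap π ≃* F ⧸ σ.ker :=
            QuotientGroup.quotientMulEquivOfEq hkerσ.symm
          haveI : Finite ((F ⧸ N) ⧸ M) := Finite.of_surjective _ (QuotientGroup.mk'_surjective M)
          exact ⟨Finite.of_equiv _ (e3.trans e2).symm.toEquiv, hPG.of_equiv (e3.trans e2).symm⟩
        have hx' := hx p hp
        rw [hpf p] at hx'
        simp only [Set.mem_iInter] at hx'
        obtain ⟨a, ha, t, ht, hat⟩ := hx' (M.comap π) hNM hVp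
        have hat' : a * t = x := hat
        have hmul : π x = π a * π t := by rw [← map_mul, hat']
        have hπa : π a ∈ (List.ofFn fun i => (((H i).map π : Subgroup _) : Set (F ⧸ N))).prod := by
          rw [← himg]
          exact Set.mem_image_of_mem _ ha
        have hπt : π t ∈ (M : Set (F ⧸ N)) := ht
        rw [hmul]
        exact Set.mul_mem_mul hπa hπt
      have hconc := nilpotent_component_reduction (fun i => (H i).map π) (π x) hy
      have hximg : π x ∈ ⇑π '' S := by rw [himg]; exact hconc
      have hxSN := mem_mul_ker π hximg
      rwa [hπ, QuotientGroup.ker_mk'] at hxSN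
  · -- part 3
    rw [proTopology_closure_iUnion]
    exact Set.iUnion_congr fun j => closure_singleton_mul (gs j) _
end
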